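/- arXiv:2203.00506 — 4 statements merged into one kernel-verified Lean document; each statement's English description precedes it below -/
import Mathlib

section
/- Let 𝕂 be ℝ or ℂ, and let p < q be prime numbers. Let v be a 𝕂-analytic function defined on an open neighborhood N of 0 in 𝕂² all of whose partial derivatives of order < 2q vanish at 0. Then there exist open neighborhoods U ⊆ N and U' of 0 in 𝕂² and a bijective 𝕂-analytic map G : U → U' with G(0) = 0 whose inverse G^{−1} : U' → U is 𝕂-analytic, such that F_{p,q}(w) + v(w) = H_{p,q}(G(w)) for all w ∈ U, where H_{p,q}(x,y) = x^p − y^q and F_{p,q}(x,y) = x^p − y^q + x^{2q} + y^{2q}. (Lemma 2.2 / 'andiffeo'.) -/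
noncomputable section

open Filter
open scoped ENNReal

/-- `ℝ^n` with the Euclidean norm. -/
abbrev En (n : ℕ) : Type := EuclideanSpace ℝ (Fin n)

/-- Evaluation of a real polynomial in `n` variables at a point of `ℝ^n`. -/
def pEval {n : ℕ} (P : MvPolynomial (Fin n) ℝ) (x : En n) : ℝ :=
  MvPolynomial.eval (fun i => x i) P

/-- `f` is regular on `A ⊆ ℝ^n`: at every point `a ∈ A` there are polynomials `φ, ψ`
with `ψ a ≠ 0` and `f = φ/ψ` on `A` off the zero set of `ψ`. -/
def IsRegularOn {n : ℕ} (A : Set (En n)) (f : En n → ℝ) : Prop :=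
  ∀ a ∈ A, ∃ φ ψ : MvPolynomial (Fin n) ℝ, pEval ψ a ≠ 0 ∧
    ∀ x ∈ A, pEval ψ x ≠ 0 → f x = pEval φ x / pEval ψ x

/-- An algebraic set in `ℝ^n`: the common zero set of a family of polynomials. -/
def IsAlgebraicSet {n : ℕ} (X : Set (En n)) : Prop :=
  ∃ S : Set (MvPolynomial (Fin n) ℝ), X = {x | ∀ P ∈ S, pEval P x = 0}

/-- A function on a subset `A` is real analytic if near every point of `A` it agrees
with a genuinely real analytic function defined on an open neighborhood. -/
def AnalyticOnSubset {EE : Type*} [NormedAddCommGroup EE] [NormedSpace ℝ EE]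
    (A : Set EE) (f : EE → ℝ) : Prop :=
  ∀ a ∈ A, ∃ U : Set EE, IsOpen U ∧ a ∈ U ∧
    ∃ G : EE → ℝ, AnalyticOnNhd ℝ G U ∧ ∀ x ∈ A ∩ U, G x = f x

/-- The ideal of polynomials vanishing on `X`. -/
def polyVanishingIdeal {n : ℕ} (X : Set (En n)) : Ideal (MvPolynomial (Fin n) ℝ) where
  carrier := {P | ∀ x ∈ X, pEval P x = 0}
  add_mem' := by
    intro a b ha hb x hx
    have h1 : pEval a x = 0 := ha x hx
    have h2 : pEval b x = 0 := hb x hx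
    simp only [pEval, map_add] at h1 h2 ⊢
    rw [h1, h2, add_zero]
  zero_mem' := by
    intro x hx
    simp [pEval]
  smul_mem' := by
    intro c P hP x hx
    have h1 : pEval P x = 0 := hP x hx
    simp only [pEval, smul_eq_mul, map_mul] at h1 ⊢
    rw [h1, mul_zero]

/-- A local presentation of `X` as a nonsingular set of dimension `d` at `a`:
polynomials `P i` vanishing on `X`, cutting out `X` near `a`, with linearly
independent gradients at `a`. -/
def IsLocalPresentation {n : ℕ} (X : Set (En n)) (d : ℕ) (a : En n)
    (Ω : Set (En n)) (P : Fin (n - d) → MvPolynomial (Fin n) ℝ) : Prop :=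
  IsOpen Ω ∧ a ∈ Ω ∧ (∀ i, ∀ x ∈ X, pEval (P i) x = 0) ∧
  X ∩ Ω = {x | x ∈ Ω ∧ ∀ i, pEval (P i) x = 0} ∧
  LinearIndependent ℝ (fun i => (fun j => pEval (MvPolynomial.pderiv j (P i)) a : Fin n → ℝ))

/-- `X` is nonsingular of dimension `d` at the point `a`. -/
def NonsingularAt {n : ℕ} (X : Set (En n)) (d : ℕ) (a : En n) : Prop :=
  ∃ Ω P, IsLocalPresentation X d a Ω P

/-- `X` is nonsingular of dimension `d`. -/
def IsNonsingularOfDim {n : ℕ} (X : Set (En n)) (d : ℕ) : Prop :=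
  ∀ a ∈ X, NonsingularAt X d a

/-- `Z` is faithful at `b`: every real analytic function vanishing on `Z` near `b` is,
near `b`, a finite combination `Σ ψᵢ · Pᵢ` with `Pᵢ` polynomials vanishing on `Z`
and `ψᵢ` real analytic. -/
def FaithfulAt {n : ℕ} (Z : Set (En n)) (b : En n) : Prop :=
  ∀ U : Set (En n), IsOpen U → b ∈ U →
    ∀ g : En n → ℝ, AnalyticOnNhd ℝ g U → (∀ x ∈ Z ∩ U, g x = 0) →
      ∃ V : Set (En n), IsOpen V ∧ b ∈ V ∧ V ⊆ U ∧
        ∃ (s : ℕ) (ψ : Fin s → En n → ℝ) (P : Fin s → MvPolynomial (Fin n) ℝ),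
          (∀ i, AnalyticOnNhd ℝ (ψ i) V) ∧ (∀ i, ∀ x ∈ Z, pEval (P i) x = 0) ∧
          ∀ x ∈ V, g x = ∑ i, ψ i x * pEval (P i) x

/-- `Z` is faithful if it is faithful at each of its points. -/
def IsFaithful {n : ℕ} (Z : Set (En n)) : Prop := ∀ b ∈ Z, FaithfulAt Z b

/-- The model curve `D_{p,q} = {x^p - y^q = 0, z₁ = ⋯ = z_{m-2} = 0} ⊆ ℝ^m`. -/
def Dpq (m p q : ℕ) : Set (En m) :=
  {y | (∀ h1 : 1 < m, (y ⟨0, Nat.lt_of_succ_lt h1⟩) ^ p - (y ⟨1, h1⟩) ^ q = 0) ∧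
       ∀ i : Fin m, 2 ≤ (i : ℕ) → y i = 0}

/-- `C` is a `(p,q)`-curve in `X` (with `dim X = m`) with singular point `a`. -/
def IsPqCurve {n : ℕ} (X : Set (En n)) (m p q : ℕ) (C : Set (En n)) (a : En n) : Prop :=
  IsAlgebraicSet C ∧ C ⊆ X ∧ a ∈ C ∧ ¬ NonsingularAt C 1 a ∧
  (∀ b ∈ C, b ≠ a → NonsingularAt C 1 b) ∧ FaithfulAt C a ∧
  ∃ (O : Set (En n)) (W : Set (En m)) (σ : En n → En m) (τ : En m → En n),
    IsOpen O ∧ a ∈ O ∧ IsOpen W ∧ (0 : En m) ∈ W ∧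
    AnalyticOnNhd ℝ σ O ∧ AnalyticOnNhd ℝ τ W ∧ σ a = 0 ∧
    Set.BijOn σ (X ∩ O) W ∧ (∀ x ∈ X ∩ O, τ (σ x) = x) ∧
    σ '' (C ∩ O) = Dpq m p q ∩ W

/-- A Euclidean `d`-sphere in `ℝ^n`. -/
def IsEuclideanSphere {n : ℕ} (d : ℕ) (S : Set (En n)) : Prop :=
  ∃ (Q : AffineSubspace ℝ (En n)) (x₀ : En n) (r : ℝ),
    Module.finrank ℝ Q.direction = d + 1 ∧ x₀ ∈ Q ∧ 0 < r ∧
    S = {x | ‖x - x₀‖ = r} ∩ (Q : Set (En n))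

/-- `F_{p,q}(x,y) = x^p - y^q + x^{2q} + y^{2q}`. -/
def Fpq (p q : ℕ) (w : ℝ × ℝ) : ℝ := w.1 ^ p - w.2 ^ q + w.1 ^ (2 * q) + w.2 ^ (2 * q)

/-- `C_{p,q}`, the zero set of `F_{p,q}` in `ℝ²`. -/
def Cpq (p q : ℕ) : Set (ℝ × ℝ) := {w | Fpq p q w = 0}

/-- `H_{p,q}(x,y) = x^p - y^q`. -/
def Hpq (p q : ℕ) (w : ℝ × ℝ) : ℝ := w.1 ^ p - w.2 ^ q

/-- `E_{p,q}`, the zero set of `H_{p,q}` in `ℝ²`. -/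
def Epq (p q : ℕ) : Set (ℝ × ℝ) := {w | Hpq p q w = 0}

/-- The collection `𝒢^k(ℝ^n)`: curves affinely equivalent (inside an affine 2-plane)
to a translate of `C_{p,q}` with `p < q` primes, `pk < q`. -/
def InGk {n : ℕ} (k : ℕ) (C : Set (En n)) : Prop :=
  ∃ (Q : AffineSubspace ℝ (En n)) (φ : En n →ᵃ[ℝ] ℝ × ℝ) (p q : ℕ) (ab : ℝ × ℝ),
    Module.finrank ℝ Q.direction = 2 ∧ C ⊆ (Q : Set (En n)) ∧
    Set.BijOn φ (Q : Set (En n)) Set.univ ∧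
    p.Prime ∧ q.Prime ∧ p < q ∧ p * k < q ∧
    φ '' C = (fun z => ab + z) '' Cpq p q

/-- The collection `𝓗^k(ℝ^n)`: curves affinely equivalent (inside an affine 2-plane)
to a translate of `E_{p,q}` with `p < q` primes, `pk < q`. -/
def InHk {n : ℕ} (k : ℕ) (C : Set (En n)) : Prop :=
  ∃ (Q : AffineSubspace ℝ (En n)) (φ : En n →ᵃ[ℝ] ℝ × ℝ) (p q : ℕ) (ab : ℝ × ℝ),
    Module.finrank ℝ Q.direction = 2 ∧ C ⊆ (Q : Set (En n)) ∧
    Set.BijOn φ (Q : Set (En n)) Set.univ ∧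
    p.Prime ∧ q.Prime ∧ p < q ∧ p * k < q ∧
    φ '' C = (fun z => ab + z) '' Epq p q

/-- The unit circle in `ℝ²`. -/
def unitCircle2 : Set (ℝ × ℝ) := {w | w.1 ^ 2 + w.2 ^ 2 = 1}

/-- The unit 2-sphere in `ℝ³`. -/
def unitSphere2 : Set (En 3) := {u | ‖u‖ = 1}

/-- `F_{p,q}` as a polynomial in two variables. -/
def FpqPoly (p q : ℕ) : MvPolynomial (Fin 2) ℝ :=
  MvPolynomial.X 0 ^ p - MvPolynomial.X 1 ^ q +
    MvPolynomial.X 0 ^ (2 * q) + MvPolynomial.X 1 ^ (2 * q)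

/-- The curve `C_{p,q}` as a subset of the Euclidean plane `ℝ²`. -/
def CpqE (p q : ℕ) : Set (En 2) := {x | pEval (FpqPoly p q) x = 0}


/-- `F_{p,q}` over an arbitrary field `𝕂`. -/
def FpqK (𝕂 : Type*) [Field 𝕂] (p q : ℕ) (w : 𝕂 × 𝕂) : 𝕂 :=
  w.1 ^ p - w.2 ^ q + w.1 ^ (2 * q) + w.2 ^ (2 * q)

/-!
Since `v` vanishes to order `2q ≥ p + q` at `0`, every monomial `x^i y^j` of its Taylor series
has `i ≥ p` or `j ≥ q`, so `v = x^p A + y^q B` with `A, B` analytic and `A(0) = B(0) = 0`.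
Hence `F_{p,q} + v = x^p (1 + x^(2q-p) + A) - y^q (1 - y^q - B)`, and with analytic branches of
the `p`-th and `q`-th roots near `1` the map
`G = (x (1 + x^(2q-p) + A)^(1/p), y (1 - y^q - B)^(1/q))` satisfies `F_{p,q} + v = H_{p,q} ∘ G`.
Its derivative at `0` is the identity, so by the analytic inverse function theorem it is an
analytic isomorphism between neighbourhoods of `0`.
-/

open scoped NNReal

section InverseFunction

variable {𝕂 : Type*} [RCLike 𝕂] {E F : Type*} [NormedAddCommGroup E] [NormedSpace 𝕂 E]
  [CompleteSpace E] [NormedAddCommGroup F] [NormedSpace 𝕂 F] [CompleteSpace F]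

theorem AnalyticOnNhd.exists_localInverse {f : E → F} {S : Set E} {x : E} (hS : IsOpen S)
    (hx : x ∈ S) (hf : AnalyticOnNhd 𝕂 f S) {e : E ≃L[𝕂] F}
    (he : HasFDerivAt f (e : E →L[𝕂] F) x) :
    ∃ (U : Set E) (V : Set F) (g : F → E), IsOpen U ∧ IsOpen V ∧ x ∈ U ∧ U ⊆ S ∧
      Set.BijOn f U V ∧ AnalyticOnNhd 𝕂 g V ∧ (∀ w ∈ U, g (f w) = w) ∧ ∀ z ∈ V, f (g z) = z := by
  have hstrict : HasStrictFDerivAt f (e : E →L[𝕂] F) x :=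
    ((hf x hx).contDiffAt (n := 1)).hasStrictFDerivAt' he one_ne_zero
  set Φ := hstrict.toOpenPartialHomeomorph f
  have hx_src : x ∈ Φ.source := hstrict.mem_toOpenPartialHomeomorph_source
  -- `Φ.symm` is analytic at `f x`, and the set of points where it is analytic is open
  set V₀ := Φ.target ∩ {z | AnalyticAt 𝕂 Φ.symm z}
  have hV₀ : IsOpen V₀ := Φ.open_target.inter (isOpen_analyticAt 𝕂 _)
  set U := Φ.source ∩ Φ ⁻¹' V₀ ∩ S
  have hU : IsOpen U := (Φ.isOpen_inter_preimage hV₀).inter hS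
  have hU_src : U ⊆ Φ.source := fun w hw => hw.1.1
  refine ⟨U, Φ '' U, Φ.symm, hU, Φ.isOpen_image_of_subset_source hU hU_src,
    ⟨⟨hx_src, Φ.map_source hx_src, Φ.analyticAt_symm' hx_src (hf x hx) he.fderiv⟩, hx⟩,
    fun w hw => hw.2, (Φ.injOn.mono hU_src).bijOn_image, ?_, fun w hw => Φ.left_inv (hU_src hw),
    ?_⟩
  · rintro _ ⟨w, hw, rfl⟩
    exact hw.1.2.2
  · rintro _ ⟨w, hw, rfl⟩
    exact congrArg Φ (Φ.left_inv (hU_src hw))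

end InverseFunction

section

variable {𝕂 : Type*} [RCLike 𝕂]

theorem exists_analytic_pow_rightInverse {k : ℕ} (hk : k ≠ 0) :
    ∃ (V : Set 𝕂) (root : 𝕂 → 𝕂), IsOpen V ∧ (1 : 𝕂) ∈ V ∧ AnalyticOnNhd 𝕂 root V ∧
      root 1 = 1 ∧ ∀ z ∈ V, root z ^ k = z := by
  have hk' : (k : 𝕂) ≠ 0 := Nat.cast_ne_zero.2 hk
  have hderiv : HasFDerivAt (fun z : 𝕂 => z ^ k)
      ((ContinuousLinearEquiv.unitsEquivAut 𝕂 (Units.mk0 (k : 𝕂) hk')) : 𝕂 →L[𝕂] 𝕂) 1 := by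
    convert (hasDerivAt_pow k (1 : 𝕂)).hasFDerivAt using 1
    ext
    simp
  obtain ⟨U, V, root, -, hV, h1U, -, hbij, hroot, hinv, hright⟩ :=
    AnalyticOnNhd.exists_localInverse isOpen_univ (Set.mem_univ _)
      (fun z _ => analyticAt_id.pow k) hderiv
  refine ⟨V, root, hV, by simpa using hbij.mapsTo h1U, hroot, by simpa using hinv 1 h1U, hright⟩

theorem hasFDerivAt_mul_of_eq_one {E : Type*} [NormedAddCommGroup E] [NormedSpace 𝕂 E]
    {φ : E → 𝕂} {x : E} (L : E →L[𝕂] 𝕂) (hL : L x = 0) (hφ : DifferentiableAt 𝕂 φ x)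
    (h1 : φ x = 1) : HasFDerivAt (fun w => L w * φ w) L x := by
  refine (L.hasFDerivAt.mul hφ.hasFDerivAt).congr_fderiv ?_
  ext
  simp [hL, h1]

theorem HasFPowerSeriesOnBall.exists_eq_zero_of_iteratedFDeriv_eq_zero {E F : Type*}
    [NormedAddCommGroup E] [NormedSpace 𝕂 E] [NormedAddCommGroup F] [NormedSpace 𝕂 F]
    [CompleteSpace F] {f : E → F} {s : FormalMultilinearSeries 𝕂 E F} {x : E} {r : ℝ≥0∞}
    (hf : HasFPowerSeriesOnBall f s x r) {N : ℕ} (hN : ∀ i < N, iteratedFDeriv 𝕂 i f x = 0) :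
    ∃ s' : FormalMultilinearSeries 𝕂 E F, HasFPowerSeriesOnBall f s' x r ∧ ∀ n < N, s' n = 0 := by
  have hdiag : ∀ n < N, ∀ y, s n (fun _ => y) = 0 := fun n hn y => by
    have h := hf.factorial_smul y n
    rw [hN n hn, zero_apply, ← Nat.cast_smul_eq_nsmul 𝕂] at h
    exact (smul_eq_zero.1 h).resolve_left (Nat.cast_ne_zero.2 n.factorial_ne_zero)
  refine ⟨fun n => if n < N then 0 else s n, ⟨?_, hf.r_pos, fun {y} hy => ?_⟩,
    fun n hn => if_pos hn⟩
  · refine hf.r_le.trans (FormalMultilinearSeries.radius_le_of_le fun n => ?_)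
    split_ifs <;> simp
  · convert hf.hasSum hy using 2 with n
    split_ifs with hn
    · simp [hdiag n hn]
    · rfl

section Splitting

def basisPattern {n : ℕ} (S : Finset (Fin n)) : Fin n → 𝕂 × 𝕂 :=
  fun i => if i ∈ S then (1, 0) else (0, 1)

def binaryForm {n : ℕ} (c : Finset (Fin n) → 𝕂) (w : 𝕂 × 𝕂) : 𝕂 :=
  ∑ S, c S * w.1 ^ S.card * w.2 ^ (n - S.card)

theorem binaryForm_ite_add_binaryForm_ite {n : ℕ} (P : Finset (Fin n) → Prop) [DecidablePred P]
    (c : Finset (Fin n) → 𝕂) (w : 𝕂 × 𝕂) :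
    binaryForm (fun S => if P S then c S else 0) w + binaryForm (fun S => if P S then 0 else c S) w
      = binaryForm c w := by
  simp only [binaryForm, ← Finset.sum_add_distrib]
  refine Finset.sum_congr rfl fun S _ => ?_
  split_ifs <;> ring

theorem ContinuousMultilinearMap.apply_const_eq_binaryForm {n : ℕ}
    (f : ContinuousMultilinearMap 𝕂 (fun _ : Fin n => 𝕂 × 𝕂) 𝕂) (w : 𝕂 × 𝕂) :
    f (fun _ => w) = binaryForm (fun S => f (basisPattern S)) w := by
  classical
  have hw : (fun _ : Fin n => w) = (fun _ => (w.1, 0)) + (fun _ => (0, w.2)) := by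
    ext <;> simp
  rw [hw, f.map_add_univ]
  refine Finset.sum_congr rfl fun S _ => ?_
  have hS : S.piecewise (fun _ => (w.1, (0 : 𝕂))) (fun _ => ((0 : 𝕂), w.2))
      = fun i => (if i ∈ S then w.1 else w.2) • basisPattern S i := by
    ext i <;> by_cases h : i ∈ S <;> simp [basisPattern, h]
  rw [hS, f.map_smul_univ, Finset.prod_ite, Finset.prod_const, Finset.prod_const, smul_eq_mul]
  simp [Finset.filter_not, Finset.card_univ_sdiff]
  ring

theorem ContinuousMultilinearMap.norm_apply_basisPattern_le {n : ℕ}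
    (f : ContinuousMultilinearMap 𝕂 (fun _ : Fin n => 𝕂 × 𝕂) 𝕂) (S : Finset (Fin n)) :
    ‖f (basisPattern S)‖ ≤ ‖f‖ := by
  have h : ∀ i, ‖(basisPattern S i : 𝕂 × 𝕂)‖ = 1 := fun i => by
    unfold basisPattern
    split_ifs <;> simp [Prod.norm_def]
  simpa [h] using f.le_opNorm (basisPattern S)

variable (𝕂) in
def monomialCML (m k : ℕ) : ContinuousMultilinearMap 𝕂 (fun _ : Fin m => 𝕂 × 𝕂) 𝕂 :=
  (ContinuousMultilinearMap.mkPiAlgebra 𝕂 (Fin m) 𝕂).compContinuousLinearMap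
    fun i => if (i : ℕ) < k then ContinuousLinearMap.fst 𝕂 𝕂 𝕂 else ContinuousLinearMap.snd 𝕂 𝕂 𝕂

theorem monomialCML_apply_const {m k : ℕ} (hk : k ≤ m) (w : 𝕂 × 𝕂) :
    monomialCML 𝕂 m k (fun _ => w) = w.1 ^ k * w.2 ^ (m - k) := by
  have h : ∀ i : Fin m, (if (i : ℕ) < k then ContinuousLinearMap.fst 𝕂 𝕂 𝕂
      else ContinuousLinearMap.snd 𝕂 𝕂 𝕂) w = if (i : ℕ) < k then w.1 else w.2 := fun i => by
    split_ifs <;> rfl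
  have hlt : (Finset.univ.filter fun i : Fin m => (i : ℕ) < k).card = k := by
    simp [Fin.card_filter_val_lt, hk]
  have hge : (Finset.univ.filter fun i : Fin m => ¬ (i : ℕ) < k).card = m - k := by
    have := Finset.card_filter_add_card_filter_not (s := Finset.univ)
      (p := fun i : Fin m => (i : ℕ) < k)
    rw [hlt, Finset.card_univ, Fintype.card_fin] at this
    omega
  simp only [monomialCML, ContinuousMultilinearMap.compContinuousLinearMap_apply,
    ContinuousMultilinearMap.mkPiAlgebra_apply, h, Finset.prod_ite, Finset.prod_const, hlt, hge]

theorem norm_monomialCML_le (m k : ℕ) : ‖monomialCML 𝕂 m k‖ ≤ 1 := by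
  refine (ContinuousMultilinearMap.norm_compContinuousLinearMap_le _ _).trans ?_
  rw [ContinuousMultilinearMap.norm_mkPiAlgebra, one_mul]
  refine Finset.prod_le_one (fun _ _ => norm_nonneg _) fun i _ => ?_
  split_ifs
  · exact ContinuousLinearMap.norm_fst_le 𝕂 𝕂 𝕂
  · exact ContinuousLinearMap.norm_snd_le 𝕂 𝕂 𝕂

/-- The power series of `(∑ₙ binaryForm (c n)) / (x ^ d * y ^ (k - d))`, when every monomial
occurring in `c` is divisible by `x ^ d * y ^ (k - d)`. -/
def quotientSeries (c : ∀ n, Finset (Fin n) → 𝕂) (k d : ℕ) :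
    FormalMultilinearSeries 𝕂 (𝕂 × 𝕂) 𝕂 :=
  fun m => ∑ S : Finset (Fin (m + k)), c (m + k) S • monomialCML 𝕂 m (S.card - d)

variable {c : ∀ n, Finset (Fin n) → 𝕂} {k d : ℕ}

theorem quotientSeries_apply_const {m : ℕ} (hd : d ≤ k)
    (hc : ∀ S : Finset (Fin (m + k)), c (m + k) S ≠ 0 → d ≤ S.card ∧ S.card + k ≤ m + k + d)
    (w : 𝕂 × 𝕂) :
    w.1 ^ d * w.2 ^ (k - d) * quotientSeries c k d m (fun _ => w) = binaryForm (c (m + k)) w := by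
  simp only [quotientSeries, sum_apply, smul_apply, smul_eq_mul, Finset.mul_sum, binaryForm]
  refine Finset.sum_congr rfl fun S _ => ?_
  by_cases h : c (m + k) S = 0
  · simp [h]
  obtain ⟨h1, h2⟩ := hc S h
  rw [monomialCML_apply_const (by omega)]
  calc w.1 ^ d * w.2 ^ (k - d) * (c (m + k) S * (w.1 ^ (S.card - d) * w.2 ^ (m - (S.card - d))))
      = c (m + k) S * w.1 ^ (d + (S.card - d)) * w.2 ^ (k - d + (m - (S.card - d))) := by
        ring
    _ = c (m + k) S * w.1 ^ S.card * w.2 ^ (m + k - S.card) := by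
        congr 3 <;> omega

theorem quotientSeries_eq_zero {m : ℕ} (hc : ∀ S : Finset (Fin (m + k)), c (m + k) S = 0) :
    quotientSeries c k d m = 0 :=
  Finset.sum_eq_zero fun S _ => by
    rw [hc S]
    exact zero_smul 𝕂 (monomialCML 𝕂 m (S.card - d))

theorem quotientSeries_sum_zero (hc : ∀ S : Finset (Fin (0 + k)), c (0 + k) S = 0)
    (hr : 0 < (quotientSeries c k d).radius) : (quotientSeries c k d).sum 0 = 0 := by
  rw [← ((quotientSeries c k d).hasFPowerSeriesOnBall hr).coeff_zero 0, quotientSeries_eq_zero hc]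
  rfl

theorem norm_quotientSeries_le {M : ℕ → ℝ} (hc : ∀ n S, ‖c n S‖ ≤ M n) (m : ℕ) :
    ‖quotientSeries c k d m‖ ≤ 2 ^ (m + k) * M (m + k) :=
  calc ‖quotientSeries c k d m‖
      ≤ ∑ S : Finset (Fin (m + k)), ‖c (m + k) S • monomialCML 𝕂 m (S.card - d)‖ :=
        norm_sum_le _ _
    _ ≤ ∑ _S : Finset (Fin (m + k)), M (m + k) := Finset.sum_le_sum fun S _ => by
        rw [norm_smul]
        exact (mul_le_of_le_one_right (norm_nonneg _) (norm_monomialCML_le _ _)).trans (hc _ S)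
    _ = 2 ^ (m + k) * M (m + k) := by simp

theorem le_radius_quotientSeries (s : FormalMultilinearSeries 𝕂 (𝕂 × 𝕂) 𝕂)
    (hc : ∀ n S, ‖c n S‖ ≤ ‖s n‖) : s.radius / 2 ≤ (quotientSeries c k d).radius := by
  refine ENNReal.le_of_forall_nnreal_lt fun ρ hρ => ?_
  rcases eq_or_ne ρ 0 with rfl | hρ0
  · simp
  have h2ρ : ((2 * ρ : ℝ≥0) : ℝ≥0∞) < s.radius := by
    rw [ENNReal.coe_mul, mul_comm]
    exact (ENNReal.lt_div_iff_mul_lt (by simp) (by simp)).1 hρ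
  obtain ⟨C, -, hC⟩ := s.norm_mul_pow_le_of_lt_radius h2ρ
  have hρ' : (0 : ℝ) < ρ := by positivity
  refine (quotientSeries c k d).le_radius_of_bound (C / (ρ : ℝ) ^ k) fun m => ?_
  calc ‖quotientSeries c k d m‖ * (ρ : ℝ) ^ m
      ≤ 2 ^ (m + k) * ‖s (m + k)‖ * (ρ : ℝ) ^ m := by
        gcongr
        exact norm_quotientSeries_le hc m
    _ = ‖s (m + k)‖ * ((2 * ρ : ℝ≥0) : ℝ) ^ (m + k) / (ρ : ℝ) ^ k := by
        field_simp
        push_cast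
        ring
    _ ≤ C / (ρ : ℝ) ^ k := by
        gcongr
        exact hC _

theorem hasSum_binaryForm_of_quotientSeries (hd : d ≤ k)
    (hc : ∀ n (S : Finset (Fin n)), c n S ≠ 0 → d ≤ S.card ∧ S.card + k ≤ n + d) {w : 𝕂 × 𝕂}
    (hw : w ∈ Metric.eball 0 (quotientSeries c k d).radius) :
    HasSum (fun n => binaryForm (c n) w)
      (w.1 ^ d * w.2 ^ (k - d) * (quotientSeries c k d).sum w) := by
  have hlow : ∀ n < k, binaryForm (c n) w = 0 := fun n hn =>
    Finset.sum_eq_zero fun S _ => by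
      by_cases h : c n S = 0
      · simp [h]
      · have := hc n S h
        omega
  have hshift : HasSum (fun m => binaryForm (c (m + k)) w)
      (w.1 ^ d * w.2 ^ (k - d) * (quotientSeries c k d).sum w) := by
    simpa only [quotientSeries_apply_const hd (hc _)] using
      ((quotientSeries c k d).hasSum hw).mul_left (w.1 ^ d * w.2 ^ (k - d))
  refine (hasSum_nat_add_iff' k).1 ?_
  rwa [Finset.sum_eq_zero fun n hn => hlow n (Finset.mem_range.1 hn), sub_zero]

end Splitting

theorem AnalyticAt.exists_eq_fst_pow_mul_add_snd_pow_mul {v : 𝕂 × 𝕂 → 𝕂} (hv : AnalyticAt 𝕂 v 0)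
    {p q : ℕ} (hp : 0 < p) (hq : 0 < q) (hord : ∀ i < p + q, iteratedFDeriv 𝕂 i v 0 = 0) :
    ∃ (R : ℝ≥0∞) (A B : 𝕂 × 𝕂 → 𝕂), 0 < R ∧ AnalyticOnNhd 𝕂 A (Metric.eball 0 R) ∧
      AnalyticOnNhd 𝕂 B (Metric.eball 0 R) ∧ A 0 = 0 ∧ B 0 = 0 ∧
      ∀ w ∈ Metric.eball 0 R, v w = w.1 ^ p * A w + w.2 ^ q * B w := by
  obtain ⟨s₀, r, hs₀⟩ := hv
  obtain ⟨s, hs, hs_low⟩ := hs₀.exists_eq_zero_of_iteratedFDeriv_eq_zero hord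
  set a : ∀ n, Finset (Fin n) → 𝕂 := fun n S => s n (basisPattern S)
  have ha_low : ∀ n < p + q, ∀ S, a n S = 0 := fun n hn S => by simp [a, hs_low n hn]
  -- monomials `x ^ i * y ^ j` with `i ≥ p` go to `A`, the others have `j ≥ q` and go to `B`
  set cA : ∀ n, Finset (Fin n) → 𝕂 := fun n S => if p ≤ S.card then a n S else 0
  set cB : ∀ n, Finset (Fin n) → 𝕂 := fun n S => if p ≤ S.card then 0 else a n S
  set QA := quotientSeries cA p p
  set QB := quotientSeries cB q 0
  have hnorm : ∀ n S, ‖a n S‖ ≤ ‖s n‖ := fun n S => (s n).norm_apply_basisPattern_le S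
  have hrA : r / 2 ≤ QA.radius := (ENNReal.div_le_div_right hs.r_le 2).trans
    (le_radius_quotientSeries s fun n S => by unfold cA; split_ifs <;> simp [hnorm])
  have hrB : r / 2 ≤ QB.radius := (ENNReal.div_le_div_right hs.r_le 2).trans
    (le_radius_quotientSeries s fun n S => by unfold cB; split_ifs <;> simp [hnorm])
  have hR : 0 < r / 2 := ENNReal.half_pos hs.r_pos.ne'
  refine ⟨r / 2, QA.sum, QB.sum, hR,
    (QA.hasFPowerSeriesOnBall (hR.trans_le hrA)).analyticOnNhd.mono (Metric.eball_subset_eball hrA),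
    (QB.hasFPowerSeriesOnBall (hR.trans_le hrB)).analyticOnNhd.mono (Metric.eball_subset_eball hrB),
    quotientSeries_sum_zero (fun S => by simp [cA, ha_low (0 + p) (by omega) S]) (hR.trans_le hrA),
    quotientSeries_sum_zero (fun S => by simp [cB, ha_low (0 + q) (by omega) S]) (hR.trans_le hrB),
    fun w hw => ?_⟩
  have hv_sum : HasSum (fun n => binaryForm (a n) w) (v w) := by
    simpa [ContinuousMultilinearMap.apply_const_eq_binaryForm] using
      hs.hasSum (Metric.eball_subset_eball ENNReal.half_le_self hw)
  have hA_sum := hasSum_binaryForm_of_quotientSeries le_rfl (fun n S hS => by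
    simp only [cA, ne_eq, ite_eq_right_iff, Classical.not_imp] at hS
    exact ⟨hS.1, by have := Fintype.card_fin n ▸ S.card_le_univ; omega⟩)
    (Metric.eball_subset_eball hrA hw)
  have hB_sum := hasSum_binaryForm_of_quotientSeries (Nat.zero_le q) (fun n S hS => by
    simp only [cB, ne_eq, ite_eq_left_iff, Classical.not_imp] at hS
    have hn : p + q ≤ n := by
      by_contra h
      exact hS.2 (ha_low n (by omega) S)
    exact ⟨Nat.zero_le _, by omega⟩)
    (Metric.eball_subset_eball hrB hw)
  refine hv_sum.unique ?_
  convert hA_sum.add hB_sum using 1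
  · ext n
    exact (binaryForm_ite_add_binaryForm_ite _ (a n) w).symm
  · simp [QA, QB]

theorem exists_analytic_localEquiv_fst_pow_mul_snd_pow_mul {S : Set (𝕂 × 𝕂)} (hS : IsOpen S)
    (h0 : (0 : 𝕂 × 𝕂) ∈ S) {c₁ c₂ : 𝕂 × 𝕂 → 𝕂} (hc₁ : AnalyticOnNhd 𝕂 c₁ S)
    (hc₂ : AnalyticOnNhd 𝕂 c₂ S) (hc₁0 : c₁ 0 = 1) (hc₂0 : c₂ 0 = 1) {p q : ℕ} (hp : p ≠ 0)
    (hq : q ≠ 0) :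
    ∃ (U U' : Set (𝕂 × 𝕂)) (G Ginv : 𝕂 × 𝕂 → 𝕂 × 𝕂),
      IsOpen U ∧ IsOpen U' ∧ (0 : 𝕂 × 𝕂) ∈ U ∧ (0 : 𝕂 × 𝕂) ∈ U' ∧ U ⊆ S ∧
      AnalyticOnNhd 𝕂 G U ∧ AnalyticOnNhd 𝕂 Ginv U' ∧ G 0 = 0 ∧
      Set.BijOn G U U' ∧ (∀ w ∈ U, Ginv (G w) = w) ∧
      ∀ w ∈ U, (G w).1 ^ p = w.1 ^ p * c₁ w ∧ (G w).2 ^ q = w.2 ^ q * c₂ w := by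
  obtain ⟨V₁, root₁, hV₁, h1V₁, hroot₁, hroot₁1, hroot₁_pow⟩ :=
    exists_analytic_pow_rightInverse (𝕂 := 𝕂) hp
  obtain ⟨V₂, root₂, hV₂, h1V₂, hroot₂, hroot₂1, hroot₂_pow⟩ :=
    exists_analytic_pow_rightInverse (𝕂 := 𝕂) hq
  set T := S ∩ c₁ ⁻¹' V₁ ∩ c₂ ⁻¹' V₂
  have hT : IsOpen T := (hc₂.continuousOn.mono Set.inter_subset_left).isOpen_inter_preimage
    (hc₁.continuousOn.isOpen_inter_preimage hS hV₁) hV₂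
  have h0T : (0 : 𝕂 × 𝕂) ∈ T := ⟨⟨h0, by simpa [hc₁0] using h1V₁⟩, by simpa [hc₂0] using h1V₂⟩
  set G : 𝕂 × 𝕂 → 𝕂 × 𝕂 := fun w => (w.1 * root₁ (c₁ w), w.2 * root₂ (c₂ w))
  have hG : AnalyticOnNhd 𝕂 G T := fun w hw =>
    (analyticAt_fst.mul ((hroot₁ _ hw.1.2).comp (hc₁ w hw.1.1))).prod
      (analyticAt_snd.mul ((hroot₂ _ hw.2).comp (hc₂ w hw.1.1)))
  have hG' : HasFDerivAt G ((ContinuousLinearEquiv.refl 𝕂 (𝕂 × 𝕂)) : 𝕂 × 𝕂 →L[𝕂] 𝕂 × 𝕂) 0 := by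
    rw [ContinuousLinearEquiv.coe_refl, ← ContinuousLinearMap.fst_prod_snd]
    exact (hasFDerivAt_mul_of_eq_one (ContinuousLinearMap.fst 𝕂 𝕂 𝕂) rfl
        ((hroot₁ _ h0T.1.2).comp (hc₁ 0 h0)).differentiableAt (by simp [hc₁0, hroot₁1])).prodMk
      (hasFDerivAt_mul_of_eq_one (ContinuousLinearMap.snd 𝕂 𝕂 𝕂) rfl
        ((hroot₂ _ h0T.2).comp (hc₂ 0 h0)).differentiableAt (by simp [hc₂0, hroot₂1]))
  obtain ⟨U, U', Ginv, hU, hU', h0U, hUT, hbij, hGinv, hinv, -⟩ := hG.exists_localInverse hT h0T hG'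
  have hG0 : G 0 = 0 := by simp [G]
  refine ⟨U, U', G, Ginv, hU, hU', h0U, hG0 ▸ hbij.mapsTo h0U, fun w hw => (hUT hw).1.1,
    hG.mono hUT, hGinv, hG0, hbij, hinv, fun w hw => ⟨?_, ?_⟩⟩
  · rw [mul_pow, hroot₁_pow _ (hUT hw).1.2]
  · rw [mul_pow, hroot₂_pow _ (hUT hw).2]

end

theorem lem_andiffeo_general {𝕂 : Type} [RCLike 𝕂] {p q : ℕ} (hp : p.Prime)
    (hpq : p < q) (N : Set (𝕂 × 𝕂)) (hN : IsOpen N) (h0 : (0 : 𝕂 × 𝕂) ∈ N)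
    (v : 𝕂 × 𝕂 → 𝕂) (hv : AnalyticOnNhd 𝕂 v N)
    (hord : ∀ i < 2 * q, iteratedFDeriv 𝕂 i v 0 = 0) :
    ∃ (U U' : Set (𝕂 × 𝕂)) (G Ginv : 𝕂 × 𝕂 → 𝕂 × 𝕂),
      IsOpen U ∧ IsOpen U' ∧ (0 : 𝕂 × 𝕂) ∈ U ∧ (0 : 𝕂 × 𝕂) ∈ U' ∧ U ⊆ N ∧
      AnalyticOnNhd 𝕂 G U ∧ AnalyticOnNhd 𝕂 Ginv U' ∧ G 0 = 0 ∧
      Set.BijOn G U U' ∧ (∀ w ∈ U, Ginv (G w) = w) ∧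
      ∀ w ∈ U, FpqK 𝕂 p q w + v w = (G w).1 ^ p - (G w).2 ^ q := by
  obtain ⟨R, A, B, hR, hA, hB, hA0, hB0, hvAB⟩ :=
    (hv 0 h0).exists_eq_fst_pow_mul_add_snd_pow_mul hp.pos (hp.pos.trans hpq)
      fun i hi => hord i (by omega)
  -- `F + v = x^p (1 + x^(2q-p) + A) - y^q (1 - y^q - B)`
  obtain ⟨U, U', G, Ginv, hU, hU', h0U, h0U', hUS, hG, hGinv, hG0, hbij, hinv, hGpow⟩ :=
    exists_analytic_localEquiv_fst_pow_mul_snd_pow_mul (Metric.isOpen_eball.inter hN)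
      ⟨Metric.mem_eball_self hR, h0⟩
      (c₁ := fun w => 1 + w.1 ^ (2 * q - p) + A w) (c₂ := fun w => 1 - w.2 ^ q - B w)
      (fun w hw => (analyticAt_const.add (analyticAt_fst.pow _)).add (hA w hw.1))
      (fun w hw => (analyticAt_const.sub (analyticAt_snd.pow _)).sub (hB w hw.1))
      (by simp [hA0, show 2 * q - p ≠ 0 by omega]) (by simp [hB0, show q ≠ 0 by omega])
      hp.ne_zero (show q ≠ 0 by omega)
  refine ⟨U, U', G, Ginv, hU, hU', h0U, h0U', fun w hw => (hUS hw).2, hG, hGinv, hG0, hbij, hinv,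
    fun w hw => ?_⟩
  have hx : w.1 ^ (2 * q) = w.1 ^ p * w.1 ^ (2 * q - p) := by
    rw [← pow_add]
    congr 1
    omega
  rw [(hGpow w hw).1, (hGpow w hw).2, hvAB w (hUS hw).1, FpqK, hx]
  ring

/-- Lemma `andiffeo`. -/
theorem lem_andiffeo {𝕂 : Type} [RCLike 𝕂] {p q : ℕ} (hp : p.Prime) (hq : q.Prime)
    (hpq : p < q) (N : Set (𝕂 × 𝕂)) (hN : IsOpen N) (h0 : (0 : 𝕂 × 𝕂) ∈ N)
    (v : 𝕂 × 𝕂 → 𝕂) (hv : AnalyticOnNhd 𝕂 v N)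
    (hord : ∀ i < 2 * q, iteratedFDeriv 𝕂 i v 0 = 0) :
    ∃ (U U' : Set (𝕂 × 𝕂)) (G Ginv : 𝕂 × 𝕂 → 𝕂 × 𝕂),
      IsOpen U ∧ IsOpen U' ∧ (0 : 𝕂 × 𝕂) ∈ U ∧ (0 : 𝕂 × 𝕂) ∈ U' ∧ U ⊆ N ∧
      AnalyticOnNhd 𝕂 G U ∧ AnalyticOnNhd 𝕂 Ginv U' ∧ G 0 = 0 ∧
      Set.BijOn G U U' ∧ (∀ w ∈ U, Ginv (G w) = w) ∧
      ∀ w ∈ U, FpqK 𝕂 p q w + v w = (G w).1 ^ p - (G w).2 ^ q :=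
  lem_andiffeo_general hp hpq N hN h0 v hv hord
end
end

section
/- Let 𝕂 be ℝ or ℂ, and let p < q be prime numbers. Let v be a 𝕂-analytic function defined on an open neighborhood N of 0 in 𝕂² all of whose partial derivatives of order < 2q vanish at 0. Then the germ at 0 of F_{p,q} + v is irreducible in the local ring of 𝕂-analytic function germs at 0; concretely: (F_{p,q} + v)(0) = 0, F_{p,q} + v does not vanish identically on any neighborhood of 0, and whenever g, h are 𝕂-analytic functions on an open neighborhood W ⊆ N of 0 with g(w)·h(w) = F_{p,q}(w) + v(w) for all w ∈ W, then g(0) ≠ 0 or h(0) ≠ 0. (Lemma 'Kirreducible'.) -/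
noncomputable section

open Filter
open scoped ENNReal

/-!
Along a weighted curve `t ↦ (s t^q, c t^p)` with `s^p ≠ c^q`, `F_{p,q} + v` vanishes to order
exactly `pq`: the flatness of `v` gives `v` order at least `2pq` there. If `F_{p,q} + v = g h` with
`g(0) = h(0) = 0`, the orders of `g` and `h` along such a curve add up to `pq`. For generic
`(s, c)` these orders are minimal, since the `n`-th `t`-derivative at `t = 0` is analytic in
`(s, c)`; in particular they are bounded by the orders along `(t^q, 0)`, which are positive
multiples of `q`, and along `(0, t^p)`, which are multiples of `p`. Comparing the sums forces
equality, so the generic order of `g` is a positive multiple of `pq`, and nothing is left for `h`.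
-/

open Topology Asymptotics

section OneVariable

variable {𝕜 F : Type*} [NontriviallyNormedField 𝕜] [NormedAddCommGroup F] [NormedSpace 𝕜 F]

lemma natCast_le_analyticOrderAt_of_isBigO {f : 𝕜 → F} {z₀ : 𝕜} {m : ℕ}
    (hf : AnalyticAt 𝕜 f z₀) (h : f =O[𝓝 z₀] fun z => (z - z₀) ^ m) :
    (m : ℕ∞) ≤ analyticOrderAt f z₀ := by
  by_contra! hlt
  obtain ⟨k, hk⟩ := ENat.ne_top_iff_exists.mp (hlt.trans_le le_top).ne
  have hkm : k < m := by rw [← hk] at hlt; exact_mod_cast hlt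
  obtain ⟨u, hu, hu0, hfu⟩ := hf.analyticOrderAt_eq_natCast.mp hk.symm
  have hu_small : u =O[𝓝[≠] z₀] fun z => (z - z₀) ^ (m - k) := by
    have hfu' : f =O[𝓝[≠] z₀] fun z => (z - z₀) ^ k * (z - z₀) ^ (m - k) := by
      simpa only [← pow_add, Nat.add_sub_cancel' hkm.le] using h.mono nhdsWithin_le_nhds
    refine ((isBigO_refl (fun z => ((z - z₀) ^ k)⁻¹) _).smul hfu').congr' ?_ ?_
    · filter_upwards [hfu.filter_mono nhdsWithin_le_nhds, self_mem_nhdsWithin] with z hz hne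
      rw [hz, smul_smul, inv_mul_cancel₀ (pow_ne_zero _ (sub_ne_zero.mpr hne)), one_smul]
    · filter_upwards [self_mem_nhdsWithin] with z hne
      rw [smul_eq_mul, ← mul_assoc, inv_mul_cancel₀ (pow_ne_zero _ (sub_ne_zero.mpr hne)),
        one_mul]
  have hpow : Tendsto (fun z => (z - z₀) ^ (m - k)) (𝓝[≠] z₀) (𝓝 0) := by
    refine Tendsto.mono_left ?_ nhdsWithin_le_nhds
    have hcont : Continuous fun z : 𝕜 => (z - z₀) ^ (m - k) := by fun_prop
    simpa [zero_pow (Nat.sub_ne_zero_of_lt hkm)] using hcont.tendsto z₀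
  exact hu0 (tendsto_nhds_unique (hu.continuousAt.tendsto.mono_left nhdsWithin_le_nhds)
    (hu_small.trans_tendsto hpow))

lemma analyticOrderAt_comp_pow {f : 𝕜 → F} (hf : AnalyticAt 𝕜 f 0) {k : ℕ} (hk : k ≠ 0) :
    analyticOrderAt (fun t => f (t ^ k)) 0 = analyticOrderAt f 0 * k := by
  have hf' : AnalyticAt 𝕜 f ((fun t : 𝕜 => t ^ k) 0) := by simpa [zero_pow hk] using hf
  have h := hf'.analyticOrderAt_comp (g := fun t : 𝕜 => t ^ k) (by fun_prop)
  have hmon : analyticOrderAt (fun t : 𝕜 => t ^ k - 0 ^ k) 0 = k := by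
    simpa [zero_pow hk, Pi.pow_def] using
      analyticOrderAt_centeredMonomial (𝕜 := 𝕜) (z₀ := 0) (n := k)
  rwa [hmon, zero_pow hk] at h

end OneVariable

section Flat

variable {𝕜 E F : Type*} [NontriviallyNormedField 𝕜] [CharZero 𝕜] [NormedAddCommGroup E]
  [NormedSpace 𝕜 E] [NormedAddCommGroup F] [NormedSpace 𝕜 F] [CompleteSpace F]

lemma isBigO_norm_pow_of_iteratedFDeriv_eq_zero {v : E → F} {x : E} (hv : AnalyticAt 𝕜 v x)
    {M : ℕ} (hM : ∀ i < M, iteratedFDeriv 𝕜 i v x = 0) :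
    v =O[𝓝 x] fun z => ‖z - x‖ ^ M := by
  obtain ⟨P, r, hP⟩ := hv
  have hcoeff : ∀ i < M, ∀ y : E, P i (fun _ => y) = 0 := fun i hi y => by
    have := hP.factorial_smul y i
    rwa [hM i hi, zero_apply, ← Nat.cast_smul_eq_nsmul 𝕜,
      smul_eq_zero, or_iff_right (Nat.cast_ne_zero.mpr i.factorial_ne_zero)] at this
  have hsum : ∀ y, P.partialSum M y = 0 := fun y =>
    Finset.sum_eq_zero fun i hi => hcoeff i (Finset.mem_range.mp hi) y
  have := (hP.hasFPowerSeriesAt.isBigO_sub_partialSum_pow M).comp_tendsto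
    (tendsto_sub_nhds_zero_iff.mpr (tendsto_id (x := 𝓝 x)))
  simpa [hsum, Function.comp_def] using this

end Flat

section Parametric

instance {X : Type*} [TopologicalSpace X] [BaireSpace X] [Nonempty X] : (residual X).NeBot :=
  forall_mem_nonempty_iff_neBot.mp fun _ hs => (dense_of_mem_residual hs).nonempty

variable {𝕜 E F : Type*} [NontriviallyNormedField 𝕜] [NormedAddCommGroup E] [NormedSpace 𝕜 E]
  [NormedAddCommGroup F] [NormedSpace 𝕜 F]

lemma AnalyticOnNhd.eventually_residual_ne_zero [PreconnectedSpace E] {f : E → F}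
    (hf : AnalyticOnNhd 𝕜 f Set.univ) {x₀ : E} (hx₀ : f x₀ ≠ 0) :
    ∀ᶠ x in residual E, f x ≠ 0 := by
  refine residual_of_dense_open (isOpen_ne_fun hf.continuous continuous_const)
    (dense_iff_inter_open.mpr fun U hU ⟨y, hy⟩ => ?_)
  by_contra hempty
  have hzero : f =ᶠ[𝓝 y] 0 := by
    filter_upwards [hU.mem_nhds hy] with x hx
    by_contra hne
    exact hempty ⟨x, hx, hne⟩
  exact hx₀ (hf.eqOn_zero_of_preconnected_of_eventuallyEq_zero isPreconnected_univ
    (Set.mem_univ y) hzero (Set.mem_univ x₀))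

variable [CompleteSpace F]

lemma AnalyticOnNhd.iteratedDeriv_snd {Φ : E × 𝕜 → F} {Ω : Set (E × 𝕜)} (hΩ : IsOpen Ω)
    (hΦ : AnalyticOnNhd 𝕜 Φ Ω) (n : ℕ) :
    AnalyticOnNhd 𝕜 (fun z : E × 𝕜 => iteratedDeriv n (fun t => Φ (z.1, t)) z.2) Ω := by
  induction n with
  | zero => simpa using hΦ
  | succ n ih =>
    refine AnalyticOnNhd.congr hΩ
      (g := fun z => iteratedDeriv (n + 1) (fun t => Φ (z.1, t)) z.2)
      (fun z hz => ((ContinuousLinearMap.apply 𝕜 F ((0, 1) : E × 𝕜)).analyticAt _).comp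
        (ih.fderiv z hz)) fun z hz => ?_
    have hsec : HasDerivAt (fun t : 𝕜 => (z.1, t)) ((0, 1) : E × 𝕜) z.2 :=
      (hasDerivAt_const _ _).prodMk (hasDerivAt_id _)
    show _ = iteratedDeriv (n + 1) _ _
    rw [iteratedDeriv_succ]
    exact (((ih z hz).differentiableAt.hasFDerivAt.comp_hasDerivAt z.2 hsec).deriv).symm

lemma eventually_residual_analyticOrderAt_le [CharZero 𝕜] [PreconnectedSpace E]
    {Φ : E × 𝕜 → F} {Ω : Set (E × 𝕜)} (hΩ : IsOpen Ω) (hΦ : AnalyticOnNhd 𝕜 Φ Ω) {t₀ : 𝕜}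
    (hΩ₀ : ∀ x, (x, t₀) ∈ Ω) {x₀ : E} (hx₀ : analyticOrderAt (fun t => Φ (x₀, t)) t₀ ≠ ⊤) :
    ∀ᶠ x in residual E,
      analyticOrderAt (fun t => Φ (x, t)) t₀ ≤ analyticOrderAt (fun t => Φ (x₀, t)) t₀ := by
  obtain ⟨n, hn⟩ := ENat.ne_top_iff_exists.mp hx₀
  rw [← hn]
  have hsec : ∀ x, AnalyticAt 𝕜 (fun t => Φ (x, t)) t₀ := fun x =>
    (hΦ _ (hΩ₀ x)).comp (analyticAt_const.prod analyticAt_id)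
  set δ : E → F := fun x => iteratedDeriv n (fun t => Φ (x, t)) t₀
  have hδ : AnalyticOnNhd 𝕜 δ Set.univ := fun x _ =>
    (hΦ.iteratedDeriv_snd hΩ n _ (hΩ₀ x)).comp (f := fun x : E => (x, t₀))
      (analyticAt_id.prod analyticAt_const)
  have hδx₀ : δ x₀ ≠ 0 :=
    ((analyticOrderAt_eq_nat_iff_iteratedDeriv_eq_zero (hsec x₀)).mp hn.symm).2
  filter_upwards [hδ.eventually_residual_ne_zero hδx₀] with x hx
  by_contra! hlt
  exact hx ((natCast_le_analyticOrderAt_iff_iteratedDeriv_eq_zero (hsec x)).mp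
    (Order.add_one_le_of_lt hlt) n (lt_add_one n))

end Parametric

section WeightedCurve

variable {𝕂 F : Type*} [RCLike 𝕂] [NormedAddCommGroup F] [NormedSpace 𝕂 F] {p q : ℕ}

/-- The weights make `x ^ p` and `y ^ q` both of order `p * q` along the curve. -/
def weightedCurve (p q : ℕ) (z : 𝕂 × 𝕂) (t : 𝕂) : 𝕂 × 𝕂 := (z.1 * t ^ q, z.2 * t ^ p)

def weightedCurveOrder (p q : ℕ) (f : 𝕂 × 𝕂 → F) (z : 𝕂 × 𝕂) : ℕ∞ :=
  analyticOrderAt (fun t => f (weightedCurve p q z t)) 0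

lemma weightedCurve_zero (hp : p ≠ 0) (hq : q ≠ 0) (z : 𝕂 × 𝕂) : weightedCurve p q z 0 = 0 := by
  simp [weightedCurve, zero_pow hp, zero_pow hq]

lemma analyticAt_uncurry_weightedCurve (x : (𝕂 × 𝕂) × 𝕂) :
    AnalyticAt 𝕂 (fun zt : (𝕂 × 𝕂) × 𝕂 => weightedCurve p q zt.1 zt.2) x :=
  ((analyticAt_fst.comp analyticAt_fst).mul (analyticAt_snd.pow q)).prod
    ((analyticAt_snd.comp analyticAt_fst).mul (analyticAt_snd.pow p))

lemma analyticAt_weightedCurve (z : 𝕂 × 𝕂) (t : 𝕂) : AnalyticAt 𝕂 (weightedCurve p q z) t :=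
  (analyticAt_uncurry_weightedCurve (z, t)).comp (f := fun t : 𝕂 => (z, t))
    (analyticAt_const.prod analyticAt_id)

lemma tendsto_weightedCurve (hp : p ≠ 0) (hq : q ≠ 0) (z : 𝕂 × 𝕂) :
    Tendsto (weightedCurve p q z) (𝓝 0) (𝓝 0) := by
  simpa [weightedCurve_zero hp hq] using
    (analyticAt_weightedCurve (p := p) (q := q) z 0).continuousAt.tendsto

lemma AnalyticAt.comp_weightedCurve {f : 𝕂 × 𝕂 → F} (hf : AnalyticAt 𝕂 f 0) (hp : p ≠ 0)
    (hq : q ≠ 0) (z : 𝕂 × 𝕂) : AnalyticAt 𝕂 (fun t => f (weightedCurve p q z t)) 0 :=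
  (weightedCurve_zero hp hq z ▸ hf).comp (analyticAt_weightedCurve z 0)

lemma norm_weightedCurve_le (hpq : p ≤ q) (z : 𝕂 × 𝕂) {t : 𝕂} (ht : ‖t‖ ≤ 1) :
    ‖weightedCurve p q z t‖ ≤ ‖z‖ * ‖t‖ ^ p := by
  simp only [weightedCurve, Prod.norm_def, norm_mul, norm_pow]
  refine max_le ?_ ?_
  · calc ‖z.1‖ * ‖t‖ ^ q ≤ ‖z.1‖ * ‖t‖ ^ p :=
          mul_le_mul_of_nonneg_left (pow_le_pow_of_le_one (norm_nonneg t) ht hpq) (norm_nonneg _)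
      _ ≤ max ‖z.1‖ ‖z.2‖ * ‖t‖ ^ p := by gcongr; exact le_max_left _ _
  · gcongr; exact le_max_right _ _

lemma natCast_mul_le_weightedCurveOrder {v : 𝕂 × 𝕂 → F} (hv : AnalyticAt 𝕂 v 0) {M : ℕ}
    (hvM : v =O[𝓝 0] fun w => ‖w‖ ^ M) (hp : p ≠ 0) (hpq : p ≤ q) (z : 𝕂 × 𝕂) :
    ((p * M : ℕ) : ℕ∞) ≤ weightedCurveOrder p q v z := by
  have hq : q ≠ 0 := by omega
  refine natCast_le_analyticOrderAt_of_isBigO (hv.comp_weightedCurve hp hq z) ?_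
  refine (hvM.comp_tendsto (tendsto_weightedCurve hp hq z)).trans (isBigO_iff.mpr ⟨‖z‖ ^ M, ?_⟩)
  filter_upwards [Metric.closedBall_mem_nhds (0 : 𝕂) one_pos] with t ht
  rw [mem_closedBall_zero_iff] at ht
  calc ‖‖weightedCurve p q z t‖ ^ M‖ = ‖weightedCurve p q z t‖ ^ M := by simp
    _ ≤ (‖z‖ * ‖t‖ ^ p) ^ M := by gcongr; exact norm_weightedCurve_le hpq z ht
    _ = ‖z‖ ^ M * ‖(t - 0) ^ (p * M)‖ := by simp [mul_pow, pow_mul]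

lemma FpqK_weightedCurve (hpq : p ≤ 2 * q) (z : 𝕂 × 𝕂) (t : 𝕂) :
    FpqK 𝕂 p q (weightedCurve p q z t) = t ^ (p * q) * (z.1 ^ p - z.2 ^ q +
      z.1 ^ (2 * q) * t ^ (2 * q * q - p * q) + z.2 ^ (2 * q) * t ^ (p * q)) := by
  have hexp : q * (2 * q) = p * q + (2 * q * q - p * q) := by
    rw [Nat.add_sub_cancel' (Nat.mul_le_mul_right q hpq)]; ring
  simp only [FpqK, weightedCurve, mul_pow, ← pow_mul, hexp, pow_add]
  ring

lemma weightedCurveOrder_FpqK (hp : p ≠ 0) (hpq : p < q) {z : 𝕂 × 𝕂} (hz : z.1 ^ p ≠ z.2 ^ q) :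
    weightedCurveOrder p q (FpqK 𝕂 p q) z = (p * q : ℕ) := by
  have hpq0 : p * q ≠ 0 := mul_ne_zero hp (by omega)
  have hexp0 : 2 * q * q - p * q ≠ 0 := by
    have : p * q < 2 * q * q := Nat.mul_lt_mul_of_pos_right (by omega) (by omega)
    omega
  unfold weightedCurveOrder
  simp only [FpqK_weightedCurve (by omega : p ≤ 2 * q)]
  rw [AnalyticAt.analyticOrderAt_eq_natCast (by fun_prop)]
  refine ⟨fun t => z.1 ^ p - z.2 ^ q + z.1 ^ (2 * q) * t ^ (2 * q * q - p * q) +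
    z.2 ^ (2 * q) * t ^ (p * q), by fun_prop, ?_, by simp⟩
  simp [zero_pow hexp0, zero_pow hpq0, sub_ne_zero.mpr hz]

lemma weightedCurveOrder_FpqK_add (hp : p ≠ 0) (hpq : p < q) {v : 𝕂 × 𝕂 → 𝕂}
    (hv : AnalyticAt 𝕂 v 0) (hvM : v =O[𝓝 0] fun w => ‖w‖ ^ (2 * q)) {z : 𝕂 × 𝕂}
    (hz : z.1 ^ p ≠ z.2 ^ q) :
    weightedCurveOrder p q (fun w => FpqK 𝕂 p q w + v w) z = (p * q : ℕ) := by
  have hF := weightedCurveOrder_FpqK hp hpq hz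
  have hlt : ((p * q : ℕ) : ℕ∞) < ((p * (2 * q) : ℕ) : ℕ∞) := by
    exact_mod_cast Nat.mul_lt_mul_of_pos_left (by omega) (by omega)
  unfold weightedCurveOrder at hF ⊢
  rw [← hF]
  exact analyticOrderAt_add_eq_left_of_lt
    (hF ▸ hlt.trans_le (natCast_mul_le_weightedCurveOrder hv hvM hp hpq.le z))

end WeightedCurve

section Factorization

variable {𝕂 F : Type*} [RCLike 𝕂] [NormedAddCommGroup F] [NormedSpace 𝕂 F] {p q : ℕ}

lemma weightedCurveOrder_mul {f g h : 𝕂 × 𝕂 → 𝕂} (hg : AnalyticAt 𝕂 g 0)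
    (hh : AnalyticAt 𝕂 h 0) (hp : p ≠ 0) (hq : q ≠ 0) (hf : ∀ᶠ w in 𝓝 0, g w * h w = f w)
    (z : 𝕂 × 𝕂) :
    weightedCurveOrder p q f z = weightedCurveOrder p q g z + weightedCurveOrder p q h z := by
  unfold weightedCurveOrder
  rw [← analyticOrderAt_mul (hg.comp_weightedCurve hp hq z) (hh.comp_weightedCurve hp hq z)]
  exact analyticOrderAt_congr (((tendsto_weightedCurve hp hq z).eventually hf).mono
    fun t ht => ht.symm)

lemma eventually_residual_weightedCurveOrder_le [CompleteSpace F] {f : 𝕂 × 𝕂 → F}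
    {W : Set (𝕂 × 𝕂)} (hW : IsOpen W) (hW0 : 0 ∈ W) (hf : AnalyticOnNhd 𝕂 f W) (hp : p ≠ 0)
    (hq : q ≠ 0) {z₀ : 𝕂 × 𝕂} (hz₀ : weightedCurveOrder p q f z₀ ≠ ⊤) :
    ∀ᶠ z in residual (𝕂 × 𝕂), weightedCurveOrder p q f z ≤ weightedCurveOrder p q f z₀ := by
  have hcont : Continuous fun zt : (𝕂 × 𝕂) × 𝕂 => weightedCurve p q zt.1 zt.2 :=
    continuous_iff_continuousAt.mpr fun x => (analyticAt_uncurry_weightedCurve x).continuousAt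
  exact eventually_residual_analyticOrderAt_le (hW.preimage hcont)
    (hf.comp (fun x _ => analyticAt_uncurry_weightedCurve x) fun _ hx => hx)
    (fun z => by simpa [weightedCurve_zero hp hq] using hW0) hz₀

lemma weightedCurveOrder_one_zero {f : 𝕂 × 𝕂 → F} (hf : AnalyticAt 𝕂 f 0) (hq : q ≠ 0) :
    weightedCurveOrder p q f (1, 0) = analyticOrderAt (fun t => f (t, 0)) 0 * q := by
  simpa [weightedCurveOrder, weightedCurve, Function.comp_def] using
    analyticOrderAt_comp_pow
      (hf.comp (f := fun t : 𝕂 => (t, 0)) (analyticAt_id.prod analyticAt_const)) hq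

lemma weightedCurveOrder_zero_one {f : 𝕂 × 𝕂 → F} (hf : AnalyticAt 𝕂 f 0) (hp : p ≠ 0) :
    weightedCurveOrder p q f (0, 1) = analyticOrderAt (fun t => f (0, t)) 0 * p := by
  simpa [weightedCurveOrder, weightedCurve, Function.comp_def] using
    analyticOrderAt_comp_pow
      (hf.comp (f := fun t : 𝕂 => (0, t)) (analyticAt_const.prod analyticAt_id)) hp

lemma exists_mem_ne_zero_of_weightedCurveOrder_ne_top (hp : p ≠ 0) (hq : q ≠ 0)
    {f : 𝕂 × 𝕂 → F} {z : 𝕂 × 𝕂} (hf : weightedCurveOrder p q f z ≠ ⊤) {U : Set (𝕂 × 𝕂)}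
    (hU : U ∈ 𝓝 0) : ∃ w ∈ U, f w ≠ 0 := by
  by_contra! hzero
  exact hf (analyticOrderAt_eq_top.mpr
    ((tendsto_weightedCurve hp hq z).eventually (eventually_of_mem hU hzero)))

end Factorization

lemma ENat.ne_top_of_add_eq_natCast {x y : ℕ∞} {n : ℕ} (h : x + y = n) : x ≠ ⊤ ∧ y ≠ ⊤ := by
  simpa [not_or] using (h ▸ ENat.natCast_ne_top n : x + y ≠ ⊤)

lemma eq_zero_or_eq_zero_of_weightedOrders {p q : ℕ} (hp : p ≠ 0) (hq : q ≠ 0)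
    (hpq : p.Coprime q) {m₁ m₂ a₁ a₂ b₁ b₂ : ℕ∞} (hm : m₁ + m₂ = (p * q : ℕ))
    (ha : a₁ * q + a₂ * q = (p * q : ℕ)) (hb : b₁ * p + b₂ = (p * q : ℕ)) (hm₁a : m₁ ≤ a₁ * q)
    (hm₂a : m₂ ≤ a₂ * q) (hm₁b : m₁ ≤ b₁ * p) (hm₂b : m₂ ≤ b₂) : a₁ = 0 ∨ a₂ = 0 := by
  have hfin_mul : ∀ {x : ℕ∞} {k : ℕ}, k ≠ 0 → x * k ≠ ⊤ → x ≠ ⊤ := fun hk h hx => by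
    simp_all [ENat.top_mul]
  obtain ⟨ha₁, ha₂⟩ := ENat.ne_top_of_add_eq_natCast ha
  obtain ⟨hb₁, hb₂⟩ := ENat.ne_top_of_add_eq_natCast hb
  obtain ⟨hm₁, hm₂⟩ := ENat.ne_top_of_add_eq_natCast hm
  lift a₁ to ℕ using hfin_mul hq ha₁
  lift a₂ to ℕ using hfin_mul hq ha₂
  lift b₁ to ℕ using hfin_mul hp hb₁
  lift b₂ to ℕ using hb₂
  lift m₁ to ℕ using hm₁
  lift m₂ to ℕ using hm₂
  norm_cast at *
  have h₁ : m₁ = a₁ * q := by omega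
  have h₂ : m₁ = b₁ * p := by omega
  have hdvd : p ∣ a₁ := hpq.dvd_of_dvd_mul_right ⟨b₁, by rw [← h₁, h₂, mul_comm]⟩
  rcases Nat.eq_zero_or_pos a₁ with h | h
  · exact Or.inl h
  · have : p * q ≤ a₁ * q := Nat.mul_le_mul_right q (Nat.le_of_dvd h hdvd)
    exact Or.inr (by nlinarith [Nat.pos_of_ne_zero hq])

lemma ne_zero_or_ne_zero_of_mul_eq_of_weightedCurveOrder {𝕂 : Type*} [RCLike 𝕂] {p q : ℕ}
    (hp : p ≠ 0) (hq : q ≠ 0) (hpq : p.Coprime q) {G g h : 𝕂 × 𝕂 → 𝕂}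
    (hG : ∀ z : 𝕂 × 𝕂, z.1 ^ p ≠ z.2 ^ q → weightedCurveOrder p q G z = (p * q : ℕ))
    {W : Set (𝕂 × 𝕂)} (hW : IsOpen W) (hW0 : 0 ∈ W) (hg : AnalyticOnNhd 𝕂 g W)
    (hh : AnalyticOnNhd 𝕂 h W) (hgh : ∀ w ∈ W, g w * h w = G w) : g 0 ≠ 0 ∨ h 0 ≠ 0 := by
  by_contra! ⟨hg0, hh0⟩
  have hg₀ := hg 0 hW0
  have hh₀ := hh 0 hW0
  have hsplit : ∀ z : 𝕂 × 𝕂, z.1 ^ p ≠ z.2 ^ q →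
      weightedCurveOrder p q g z + weightedCurveOrder p q h z = (p * q : ℕ) := fun z hz =>
    (weightedCurveOrder_mul hg₀ hh₀ hp hq (eventually_of_mem (hW.mem_nhds hW0) hgh) z).symm.trans
      (hG z hz)
  have hgeneric : ∀ {f : 𝕂 × 𝕂 → 𝕂} {z : 𝕂 × 𝕂}, AnalyticOnNhd 𝕂 f W →
      weightedCurveOrder p q f z ≠ ⊤ → ∀ᶠ z' in residual (𝕂 × 𝕂),
        weightedCurveOrder p q f z' ≤ weightedCurveOrder p q f z := fun hf hz =>
    eventually_residual_weightedCurveOrder_le hW hW0 hf hp hq hz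
  have hcurve : ∀ᶠ z in residual (𝕂 × 𝕂), z.1 ^ p - z.2 ^ q ≠ 0 :=
    AnalyticOnNhd.eventually_residual_ne_zero (𝕜 := 𝕂)
      (fun z _ => (analyticAt_fst.pow p).sub (analyticAt_snd.pow q)) (x₀ := (1, 0)) (by simp [hq])
  have h₁₀ := hsplit (1, 0) (by simp [hq])
  have h₀₁ := hsplit (0, 1) (by simp [hp])
  obtain ⟨z, hz, hg₁₀, hh₁₀, hg₀₁, hh₀₁⟩ := (hcurve.and <|
    (hgeneric hg (ENat.ne_top_of_add_eq_natCast h₁₀).1).and <|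
    (hgeneric hh (ENat.ne_top_of_add_eq_natCast h₁₀).2).and <|
    (hgeneric hg (ENat.ne_top_of_add_eq_natCast h₀₁).1).and
    (hgeneric hh (ENat.ne_top_of_add_eq_natCast h₀₁).2)).exists
  simp only [weightedCurveOrder_one_zero hg₀ hq, weightedCurveOrder_one_zero hh₀ hq,
    weightedCurveOrder_zero_one hg₀ hp] at h₁₀ h₀₁ hg₁₀ hh₁₀ hg₀₁
  rcases eq_zero_or_eq_zero_of_weightedOrders hp hq hpq (hsplit z (sub_ne_zero.mp hz)) h₁₀ h₀₁
    hg₁₀ hh₁₀ hg₀₁ hh₀₁ with hord₀ | hord₀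
  · exact analyticOrderAt_ne_zero.mpr
      ⟨hg₀.comp (f := fun t : 𝕂 => (t, 0)) (analyticAt_id.prod analyticAt_const), hg0⟩ hord₀
  · exact analyticOrderAt_ne_zero.mpr
      ⟨hh₀.comp (f := fun t : 𝕂 => (t, 0)) (analyticAt_id.prod analyticAt_const), hh0⟩ hord₀

/-- Lemma `Kirreducible`. -/
theorem lem_Kirreducible {𝕂 : Type} [RCLike 𝕂] {p q : ℕ} (hp : p.Prime) (hq : q.Prime)
    (hpq : p < q) (N : Set (𝕂 × 𝕂)) (hN : IsOpen N) (h0 : (0 : 𝕂 × 𝕂) ∈ N)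
    (v : 𝕂 × 𝕂 → 𝕂) (hv : AnalyticOnNhd 𝕂 v N)
    (hord : ∀ i < 2 * q, iteratedFDeriv 𝕂 i v 0 = 0) :
    (FpqK 𝕂 p q 0 + v 0 = 0) ∧
    (∀ U : Set (𝕂 × 𝕂), IsOpen U → (0 : 𝕂 × 𝕂) ∈ U →
      ∃ w ∈ U ∩ N, FpqK 𝕂 p q w + v w ≠ 0) ∧
    (∀ W : Set (𝕂 × 𝕂), IsOpen W → (0 : 𝕂 × 𝕂) ∈ W → W ⊆ N →
      ∀ g h : 𝕂 × 𝕂 → 𝕂, AnalyticOnNhd 𝕂 g W → AnalyticOnNhd 𝕂 h W →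
        (∀ w ∈ W, g w * h w = FpqK 𝕂 p q w + v w) →
        g 0 ≠ 0 ∨ h 0 ≠ 0) := by
  have hp0 := hp.ne_zero
  have hq0 := hq.ne_zero
  have hv0 : AnalyticAt 𝕂 v 0 := hv 0 h0
  have hG : ∀ z : 𝕂 × 𝕂, z.1 ^ p ≠ z.2 ^ q →
      weightedCurveOrder p q (fun w => FpqK 𝕂 p q w + v w) z = (p * q : ℕ) := fun z hz =>
    weightedCurveOrder_FpqK_add hp0 hpq hv0
      (by simpa using isBigO_norm_pow_of_iteratedFDeriv_eq_zero hv0 hord) hz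
  refine ⟨?_, fun U hU hU0 => ?_, fun W hW hW0 _ g h hg hh hgh => ?_⟩
  · have hv00 : v 0 = 0 := by simpa using congrArg (· fun _ => 0) (hord 0 (by omega))
    simp [FpqK, hv00, hp0, hq0]
  · exact exists_mem_ne_zero_of_weightedCurveOrder_ne_top hp0 hq0
      ((hG (1, 0) (by simp [hq0])).symm ▸ ENat.natCast_ne_top _)
      ((hU.inter hN).mem_nhds ⟨hU0, h0⟩)
  · exact ne_zero_or_ne_zero_of_mul_eq_of_weightedCurveOrder hp0 hq0
      ((Nat.coprime_primes hp hq).mpr hpq.ne) hG hW hW0 hg hh hgh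

end
end

section
/- Let p < q be prime numbers (so q is odd). Then the polynomial 1 − 4(t^p + t^{2q}) has exactly two real roots α < β, and C_{p,q} = {(x, φ_+(x)) : x ∈ [α, β]} ∪ {(x, φ_−(x)) : x ∈ [α, β]}, where φ_±(x) is the real q-th root of (1/2) ± (1/2)·√(1 − 4(x^p + x^{2q})). (Lemma 2.2(i) in Section 2, 'lem-2-2'.) -/
noncomputable section

open Filter
open scoped ENNReal

noncomputable def qroot (q : ℕ) (r : ℝ) : ℝ :=
  if 0 ≤ r then r ^ ((q : ℝ)⁻¹) else -((-r) ^ ((q : ℝ)⁻¹))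

lemma qroot_pow {q : ℕ} (hq : Odd q) (hq0 : q ≠ 0) (r : ℝ) : qroot q r ^ q = r := by
  unfold qroot
  split_ifs with h
  · exact Real.rpow_inv_natCast_pow h hq0
  · rw [hq.neg_pow, Real.rpow_inv_natCast_pow (by linarith) hq0, neg_neg]

lemma roots_lemma {p q : ℕ} (hp : p.Prime) (hq : q.Prime) (hpq : p < q) :
    ∃ α β : ℝ, α < β ∧ (∀ t : ℝ, t ^ p + t ^ (2 * q) = 1 / 4 ↔ t = α ∨ t = β) ∧
      (∀ x ∈ Set.Icc α β, x ^ p + x ^ (2 * q) ≤ 1 / 4) ∧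
      (∀ x : ℝ, x ∉ Set.Icc α β → 1 / 4 < x ^ p + x ^ (2 * q)) := by
  have hp0 : p ≠ 0 := hp.ne_zero
  have h2q0 : 2 * q ≠ 0 := by have := hq.pos; omega
  have hp2q : p < 2 * q := by omega
  have mono : ∀ a b : ℝ, 0 ≤ a → a < b → a ^ p + a ^ (2 * q) < b ^ p + b ^ (2 * q) := by
    intro a b ha hab
    have h1 := pow_lt_pow_left₀ hab ha hp0
    have h2 := pow_lt_pow_left₀ hab ha h2q0
    linarith
  have inj : ∀ a b : ℝ, 0 ≤ a → 0 ≤ b →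
      a ^ p + a ^ (2 * q) = b ^ p + b ^ (2 * q) → a = b := by
    intro a b ha hb heq
    rcases lt_trichotomy a b with h | h | h
    · exact absurd heq (ne_of_lt (mono a b ha h))
    · exact h
    · exact absurd heq.symm (ne_of_lt (mono b a hb h))
  obtain ⟨β, hβmem, hβ⟩ : ∃ b ∈ Set.Ioo (0 : ℝ) 1, b ^ p + b ^ (2 * q) = 1 / 4 := by
    have hc : ContinuousOn (fun t : ℝ => t ^ p + t ^ (2 * q)) (Set.Icc 0 1) :=
      (by fun_prop : Continuous fun t : ℝ => t ^ p + t ^ (2 * q)).continuousOn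
    have h14 : (1 / 4 : ℝ) ∈
        Set.Ioo ((0 : ℝ) ^ p + (0 : ℝ) ^ (2 * q)) ((1 : ℝ) ^ p + (1 : ℝ) ^ (2 * q)) := by
      rw [zero_pow hp0, zero_pow h2q0, one_pow, one_pow]; norm_num
    obtain ⟨b, hb, hfb⟩ := intermediate_value_Ioo (by norm_num : (0 : ℝ) ≤ 1) hc h14
    exact ⟨b, hb, hfb⟩
  have Heven2q : Even (2 * q) := even_two_mul q
  have hIcc : ∀ y : ℝ, 0 ≤ y → y ≤ β → y ^ p + y ^ (2 * q) ≤ 1 / 4 := by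
    intro y h0 h1
    rcases eq_or_lt_of_le h1 with h | h
    · rw [h]; exact le_of_eq hβ
    · linarith [mono y β h0 h]
  rcases Nat.even_or_odd p with hpe | hpo
  · -- p even
    have sym : ∀ t : ℝ, (-t) ^ p + (-t) ^ (2 * q) = t ^ p + t ^ (2 * q) := fun t => by
      rw [hpe.neg_pow, Heven2q.neg_pow]
    refine ⟨-β, β, by linarith [hβmem.1], ?_, ?_, ?_⟩
    · intro t
      constructor
      · intro ht
        rcases le_or_gt 0 t with h0 | h0
        · right; exact inj t β h0 hβmem.1.le (ht.trans hβ.symm)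
        · left
          have h2 : (-t) ^ p + (-t) ^ (2 * q) = 1 / 4 := by rw [sym]; exact ht
          have := inj (-t) β (by linarith) hβmem.1.le (h2.trans hβ.symm)
          linarith
      · rintro (rfl | rfl)
        · rw [sym β]; exact hβ
        · exact hβ
    · intro x hx
      rcases le_or_gt 0 x with h0 | h0
      · exact hIcc x h0 hx.2
      · have := hIcc (-x) (by linarith) (by linarith [hx.1])
        rw [sym x] at this; exact this
    · intro x hx
      rw [Set.mem_Icc, not_and_or] at hx
      push_neg at hx
      rcases hx with h | h
      · have h1 : β < -x := by linarith
        have := mono β (-x) hβmem.1.le h1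
        rw [sym x] at this; linarith
      · have := mono β x hβmem.1.le h
        linarith
  · -- p odd
    have kform : ∀ c : ℝ, c ^ (2 * q) - c ^ p = c ^ p * (c ^ (2 * q - p) - 1) := by
      intro c
      rw [mul_sub, mul_one, ← pow_add]
      have : p + (2 * q - p) = 2 * q := by omega
      rw [this]
    have kmono : ∀ a b : ℝ, 1 ≤ a → a < b →
        a ^ (2 * q) - a ^ p < b ^ (2 * q) - b ^ p := by
      intro a b ha hab
      have ha0 : (0 : ℝ) ≤ a := by linarith
      rw [kform a, kform b]
      have h1 : a ^ p < b ^ p := pow_lt_pow_left₀ hab ha0 hp0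
      have h2 : a ^ (2 * q - p) < b ^ (2 * q - p) := pow_lt_pow_left₀ hab ha0 (by omega)
      have h3 : (1 : ℝ) ≤ a ^ (2 * q - p) := one_le_pow₀ ha
      have h4 : (0 : ℝ) < b ^ p := pow_pos (by linarith) p
      have h5 : (0 : ℝ) < a ^ p := pow_pos (by linarith) p
      nlinarith
    have kinj : ∀ a b : ℝ, 1 ≤ a → 1 ≤ b →
        a ^ (2 * q) - a ^ p = b ^ (2 * q) - b ^ p → a = b := by
      intro a b ha hb heq
      rcases lt_trichotomy a b with h | h | h
      · exact absurd heq (ne_of_lt (kmono a b ha h))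
      · exact h
      · exact absurd heq.symm (ne_of_lt (kmono b a hb h))
    obtain ⟨s0, hs0mem, hk0⟩ : ∃ s ∈ Set.Ioo (1 : ℝ) 2, s ^ (2 * q) - s ^ p = 1 / 4 := by
      have hc : ContinuousOn (fun t : ℝ => t ^ (2 * q) - t ^ p) (Set.Icc 1 2) :=
        (by fun_prop : Continuous fun t : ℝ => t ^ (2 * q) - t ^ p).continuousOn
      have e1 : (2 : ℝ) ^ p ≤ 2 ^ (2 * q - 1) := pow_le_pow_right₀ one_le_two (by omega)
      have e2 : (2 : ℝ) ^ (2 * q) = 2 * 2 ^ (2 * q - 1) := by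
        have h : 2 * q - 1 + 1 = 2 * q := by omega
        conv_lhs => rw [← h, pow_succ']
      have e3 : (2 : ℝ) ≤ 2 ^ (2 * q - 1) := by
        calc (2 : ℝ) = 2 ^ 1 := (pow_one 2).symm
        _ ≤ 2 ^ (2 * q - 1) := pow_le_pow_right₀ one_le_two (by omega)
      have h14 : (1 / 4 : ℝ) ∈
          Set.Ioo ((1 : ℝ) ^ (2 * q) - (1 : ℝ) ^ p) ((2 : ℝ) ^ (2 * q) - (2 : ℝ) ^ p) := by
        rw [one_pow, one_pow]
        constructor
        · norm_num
        · rw [e2]; linarith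
      obtain ⟨b, hb, hfb⟩ := intermediate_value_Ioo (by norm_num : (1 : ℝ) ≤ 2) hc h14
      exact ⟨b, hb, hfb⟩
    have negform : ∀ t : ℝ, (-t) ^ p + (-t) ^ (2 * q) = t ^ (2 * q) - t ^ p := by
      intro t
      rw [hpo.neg_pow, Heven2q.neg_pow]; ring
    have negsmall : ∀ t : ℝ, 0 ≤ t → t ≤ 1 → (-t) ^ p + (-t) ^ (2 * q) ≤ 0 := by
      intro t h0 h1
      rw [negform t]
      have := pow_le_pow_of_le_one h0 h1 hp2q.le
      linarith
    refine ⟨-s0, β, by linarith [hs0mem.1, hβmem.1], ?_, ?_, ?_⟩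
    · intro t
      constructor
      · intro ht
        rcases le_or_gt 0 t with h0 | h0
        · right; exact inj t β h0 hβmem.1.le (ht.trans hβ.symm)
        · left
          have h1 : 1 < -t := by
            by_contra hc
            push_neg at hc
            have := negsmall (-t) (by linarith) hc
            rw [neg_neg] at this; linarith
          have hkt : (-t) ^ (2 * q) - (-t) ^ p = 1 / 4 := by
            rw [← negform (-t), neg_neg]; exact ht
          have := kinj (-t) s0 h1.le hs0mem.1.le (hkt.trans hk0.symm)
          linarith
      · rintro (rfl | rfl)
        · rw [negform s0]; exact hk0
        · exact hβ
    · intro x hx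
      rcases le_or_gt 0 x with h0 | h0
      · exact hIcc x h0 hx.2
      · rcases le_or_gt (-1) x with h1 | h1
        · have := negsmall (-x) (by linarith) (by linarith)
          rw [neg_neg] at this; linarith
        · have hg : x ^ p + x ^ (2 * q) = (-x) ^ (2 * q) - (-x) ^ p := by
            rw [← negform (-x), neg_neg]
          have h2 : -x ≤ s0 := by linarith [hx.1]
          rcases eq_or_lt_of_le h2 with h | h
          · rw [hg, h, hk0]
          · have := kmono (-x) s0 (by linarith) h
            rw [hg]; linarith
    · intro x hx
      rw [Set.mem_Icc, not_and_or] at hx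
      push_neg at hx
      rcases hx with h | h
      · have h1 : s0 < -x := by linarith
        have := kmono s0 (-x) hs0mem.1.le h1
        have hg : x ^ p + x ^ (2 * q) = (-x) ^ (2 * q) - (-x) ^ p := by
          rw [← negform (-x), neg_neg]
        rw [hg]; linarith
      · have := mono β x hβmem.1.le h
        linarith

/-- Lemma 2.2 (`lem-2-2`), part (i). -/
theorem lem_2_2_i {p q : ℕ} (hp : p.Prime) (hq : q.Prime) (hpq : p < q) :
    ∃ α β : ℝ, α < β ∧
      {t : ℝ | 1 - 4 * (t ^ p + t ^ (2 * q)) = 0} = {α, β} ∧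
      ∃ φp φm : ℝ → ℝ,
        (∀ x ∈ Set.Icc α β,
          φp x ^ q = 1 / 2 + Real.sqrt (1 - 4 * (x ^ p + x ^ (2 * q))) / 2 ∧
          φm x ^ q = 1 / 2 - Real.sqrt (1 - 4 * (x ^ p + x ^ (2 * q))) / 2) ∧
        Cpq p q =
          (fun x => (x, φp x)) '' Set.Icc α β ∪ (fun x => (x, φm x)) '' Set.Icc α β := by
  have hq0 : q ≠ 0 := hq.ne_zero
  have hqodd : Odd q := hq.odd_of_ne_two (by have := hp.two_le; omega)
  obtain ⟨α, β, hαβ, hroots, hle, hgt⟩ := roots_lemma hp hq hpq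
  refine ⟨α, β, hαβ, ?_, ?_⟩
  · ext t
    simp only [Set.mem_setOf_eq, Set.mem_insert_iff, Set.mem_singleton_iff]
    rw [← hroots t]
    constructor <;> intro h <;> linarith
  · refine ⟨fun x => qroot q (1 / 2 + Real.sqrt (1 - 4 * (x ^ p + x ^ (2 * q))) / 2),
      fun x => qroot q (1 / 2 - Real.sqrt (1 - 4 * (x ^ p + x ^ (2 * q))) / 2),
      fun x _ => ⟨qroot_pow hqodd hq0 _, qroot_pow hqodd hq0 _⟩, ?_⟩
    ext ⟨x, y⟩
    simp only [Cpq, Fpq, Set.mem_setOf_eq, Set.mem_union, Set.mem_image, Prod.mk.injEq]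
    have hymul : y ^ (2 * q) = (y ^ q) ^ 2 := by rw [mul_comm, pow_mul]
    constructor
    · intro hxy
      rw [hymul] at hxy
      have hD : 1 - 4 * (x ^ p + x ^ (2 * q)) = (2 * y ^ q - 1) ^ 2 := by nlinarith [hxy]
      have hDpos : 0 ≤ 1 - 4 * (x ^ p + x ^ (2 * q)) := by rw [hD]; positivity
      have hxmem : x ∈ Set.Icc α β := by
        by_contra hc; linarith [hgt x hc]
      have hs : Real.sqrt (1 - 4 * (x ^ p + x ^ (2 * q))) = |2 * y ^ q - 1| := by
        rw [hD, Real.sqrt_sq_eq_abs]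
      rcases abs_cases (2 * y ^ q - 1) with ⟨he, _⟩ | ⟨he, _⟩
      · left
        refine ⟨x, hxmem, rfl, ?_⟩
        have hy : (qroot q (1 / 2 + Real.sqrt (1 - 4 * (x ^ p + x ^ (2 * q))) / 2)) ^ q
            = y ^ q := by rw [qroot_pow hqodd hq0, hs, he]; ring
        exact hqodd.strictMono_pow.injective hy
      · right
        refine ⟨x, hxmem, rfl, ?_⟩
        have hy : (qroot q (1 / 2 - Real.sqrt (1 - 4 * (x ^ p + x ^ (2 * q))) / 2)) ^ q
            = y ^ q := by rw [qroot_pow hqodd hq0, hs, he]; ring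
        exact hqodd.strictMono_pow.injective hy
    · rintro (⟨x', hx', rfl, rfl⟩ | ⟨x', hx', rfl, rfl⟩)
      · have hDpos : 0 ≤ 1 - 4 * (x' ^ p + x' ^ (2 * q)) := by linarith [hle x' hx']
        have hs2 : Real.sqrt (1 - 4 * (x' ^ p + x' ^ (2 * q))) ^ 2
            = 1 - 4 * (x' ^ p + x' ^ (2 * q)) := Real.sq_sqrt hDpos
        have hu : (qroot q (1 / 2 + Real.sqrt (1 - 4 * (x' ^ p + x' ^ (2 * q))) / 2)) ^ q
            = 1 / 2 + Real.sqrt (1 - 4 * (x' ^ p + x' ^ (2 * q))) / 2 :=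
          qroot_pow hqodd hq0 _
        have hu2 : (qroot q (1 / 2 + Real.sqrt (1 - 4 * (x' ^ p + x' ^ (2 * q))) / 2)) ^ (2 * q)
            = (1 / 2 + Real.sqrt (1 - 4 * (x' ^ p + x' ^ (2 * q))) / 2) ^ 2 := by
          rw [hymul, hu]
        rw [hu, hu2]
        nlinarith [hs2]
      · have hDpos : 0 ≤ 1 - 4 * (x' ^ p + x' ^ (2 * q)) := by linarith [hle x' hx']
        have hs2 : Real.sqrt (1 - 4 * (x' ^ p + x' ^ (2 * q))) ^ 2
            = 1 - 4 * (x' ^ p + x' ^ (2 * q)) := Real.sq_sqrt hDpos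
        have hu : (qroot q (1 / 2 - Real.sqrt (1 - 4 * (x' ^ p + x' ^ (2 * q))) / 2)) ^ q
            = 1 / 2 - Real.sqrt (1 - 4 * (x' ^ p + x' ^ (2 * q))) / 2 :=
          qroot_pow hqodd hq0 _
        have hu2 : (qroot q (1 / 2 - Real.sqrt (1 - 4 * (x' ^ p + x' ^ (2 * q))) / 2)) ^ (2 * q)
            = (1 / 2 - Real.sqrt (1 - 4 * (x' ^ p + x' ^ (2 * q))) / 2) ^ 2 := by
          rw [hymul, hu]
        rw [hu, hu2]
        nlinarith [hs2]


end
end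

section
/- Let p < q be prime numbers. Then (0,0) ∈ C_{p,q}; the gradient of F_{p,q} vanishes at (0,0) and at no other point of C_{p,q}; consequently C_{p,q} is nonsingular of dimension 1 at every point of C_{p,q} ∖ {(0,0)}, while C_{p,q} is not nonsingular of dimension 1 at (0,0), i.e., the origin is the unique singular point of the real algebraic curve C_{p,q}. (Lemma 2.2(ii) in Section 2, 'lem-2-2'.) -/
noncomputable section

open Filter
open scoped ENNReal

/-!
At a critical point of `F_{p,q}` one has `-y^q + y^{2q} ∈ {0, -1/4}`, and `x ≠ 0` would force
`x^p + x^{2q} < 0`; so the origin is the only critical point on the curve and `F_{p,q}` alone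
presents the curve elsewhere. At the origin, the curve passes within `2 s^{pq+q}` of the point
`(s^q, s^p)`, so for a polynomial `P` vanishing on `C_{p,q}` the one-variable polynomial
`P(s^q, s^p)` is `O(s^{q+1})` as `s → 0⁺`. Since `p ∤ q`, its coefficients of `s^q` and `s^p`
are the linear coefficients of `P`, hence `∇P(0) = 0` and no local presentation exists.
-/

open MvPolynomial Filter Topology Asymptotics

namespace MvPolynomial

theorem eval_zero_pderiv {σ R : Type*} [CommRing R] (P : MvPolynomial σ R) (i : σ) :
    eval 0 (pderiv i P) = coeff (Finsupp.single i 1) P := by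
  simp [eval_zero, constantCoeff_eq, coeff_pderiv]

theorem polynomial_eval_aeval {σ R : Type*} [CommSemiring R] (g : σ → Polynomial R)
    (P : MvPolynomial σ R) (s : R) :
    (aeval g P).eval s = eval (fun i => (g i).eval s) P := by
  simpa using comp_aeval_apply (Polynomial.aeval s) P (f := g)

theorem coeff_aeval_X_pow {σ R : Type*} [CommSemiring R] (w : σ → ℕ) (P : MvPolynomial σ R)
    (k : ℕ) : (aeval (fun i => Polynomial.X ^ w i) P).coeff k =
      ∑ m ∈ P.support, if Finsupp.weight w m = k then coeff m P else 0 := by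
  conv_lhs => rw [P.as_sum, map_sum, Polynomial.finsetSum_coeff]
  refine Finset.sum_congr rfl fun m _ => ?_
  simp [aeval_monomial, Finsupp.weight_apply, Finsupp.prod, Finsupp.sum, ← pow_mul,
    Finset.prod_pow_eq_pow_sum, Polynomial.coeff_X_pow, eq_comm, Nat.mul_comm (w _)]

theorem coeff_aeval_X_pow_of_weight_eq_iff {σ R : Type*} [CommSemiring R] {w : σ → ℕ}
    {k : ℕ} {m₀ : σ →₀ ℕ} (hw : ∀ m, Finsupp.weight w m = k ↔ m = m₀)
    (P : MvPolynomial σ R) : (aeval (fun i => Polynomial.X ^ w i) P).coeff k = coeff m₀ P := by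
  classical
  simp [coeff_aeval_X_pow, hw, eq_comm]

end MvPolynomial

theorem Polynomial.coeff_eq_zero_of_isBigO_pow {𝕜 : Type*} [NontriviallyNormedField 𝕜]
    {l : Filter 𝕜} [l.NeBot] (hl : l ≤ 𝓝[≠] 0) {Q : Polynomial 𝕜} {N : ℕ}
    (h : (fun s => Q.eval s) =O[l] (· ^ N)) {k : ℕ} (hk : k < N) : Q.coeff k = 0 := by
  induction N generalizing Q k with
  | zero => omega
  | succ N ih =>
    have hl0 : l ≤ 𝓝 0 := hl.trans nhdsWithin_le_nhds
    have hQ0 : Q.coeff 0 = 0 := by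
      rw [coeff_zero_eq_eval_zero]
      refine tendsto_nhds_unique ((Q.continuous.tendsto 0).mono_left hl0) (h.trans_tendsto ?_)
      simpa using ((continuous_pow (N + 1)).tendsto (0 : 𝕜)).mono_left hl0
    cases k with
    | zero => exact hQ0
    | succ k =>
      rw [← coeff_divX]
      refine ih ?_ (by omega)
      have hne : ∀ᶠ s in l, s ≠ 0 := hl self_mem_nhdsWithin
      refine (h.mul (isBigO_refl (·⁻¹) l)).congr' (hne.mono fun s hs => ?_)
        (hne.mono fun s hs => ?_)
      · conv_lhs => rw [← divX_mul_X_add Q]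
        simp [hQ0, hs]
      · simp [pow_succ, hs]

theorem sub_mul_pow_le_pow_succ_sub_pow_succ {R : Type*} [CommRing R] [LinearOrder R]
    [IsStrictOrderedRing R] {x t : R} (hx : 0 ≤ x) (hxt : x ≤ t) (n : ℕ) :
    (t - x) * t ^ n ≤ t ^ (n + 1) - x ^ (n + 1) := by
  have := mul_le_mul_of_nonneg_left (pow_le_pow_left₀ hx hxt n) hx
  rw [pow_succ, pow_succ]
  linarith

theorem nonsingularAt_zeroSet_of_pderiv_ne_zero {n d : ℕ} (hd : n - d = 1)
    {F : MvPolynomial (Fin n) ℝ} {a : En n} {i : Fin n} (hi : pEval (pderiv i F) a ≠ 0) :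
    NonsingularAt {x | pEval F x = 0} d a := by
  have : Unique (Fin (n - d)) := hd ▸ inferInstance
  refine ⟨Set.univ, fun _ => F, isOpen_univ, Set.mem_univ a, fun _ _ hx => hx, ?_, ?_⟩
  · ext x
    simp [forall_const]
  · exact linearIndependent_unique_iff.mpr fun h => hi (congrFun h i)

theorem not_nonsingularAt_of_pderiv_eq_zero {n d : ℕ} (hd : d < n) {X : Set (En n)} {a : En n}
    (h : ∀ P ∈ polyVanishingIdeal X, ∀ i, pEval (pderiv i P) a = 0) :
    ¬ NonsingularAt X d a := by
  rintro ⟨Ω, P, -, -, hP, -, hind⟩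
  exact hind.ne_zero ⟨0, by omega⟩ (funext (h _ (hP _)))

section Cpq

variable {p q : ℕ}

theorem pEval_FpqPoly (x : En 2) : pEval (FpqPoly p q) x = Fpq p q (x 0, x 1) := by
  simp [pEval, FpqPoly, Fpq]

theorem pEval_pderiv_zero_FpqPoly (x : En 2) :
    pEval (pderiv 0 (FpqPoly p q)) x = p * x 0 ^ (p - 1) + 2 * q * x 0 ^ (2 * q - 1) := by
  simp [pEval, FpqPoly, pderiv_X_of_ne (show (1 : Fin 2) ≠ 0 by decide)]

theorem pEval_pderiv_one_FpqPoly (x : En 2) :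
    pEval (pderiv 1 (FpqPoly p q)) x = -(q * x 1 ^ (q - 1)) + 2 * q * x 1 ^ (2 * q - 1) := by
  simp [pEval, FpqPoly, pderiv_X_of_ne (show (0 : Fin 2) ≠ 1 by decide)]

theorem pow_add_pow_two_mul_neg (hp : 0 < p) (hpq : p < 2 * q) {a : ℝ} (ha : a ≠ 0)
    (hcrit : p * a ^ (p - 1) + 2 * q * a ^ (2 * q - 1) = 0) : a ^ p + a ^ (2 * q) < 0 := by
  set r := 2 * q - p
  have hr : (p : ℝ) + 2 * q * a ^ r = 0 := by
    rw [show 2 * q - 1 = (p - 1) + r by omega, pow_add] at hcrit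
    refine (mul_eq_zero.mp ?_).resolve_left (pow_ne_zero (p - 1) ha)
    linear_combination hcrit
  have hq : (0 : ℝ) < q := by exact_mod_cast (show 0 < q by omega)
  have hpq' : (p : ℝ) < 2 * q := by exact_mod_cast hpq
  have har : a ^ r < 0 := by nlinarith [(Nat.cast_pos.mpr hp : (0 : ℝ) < p)]
  have h2q : a ^ (2 * q) = a ^ p * a ^ r := by rw [← pow_add]; congr 1; omega
  -- `a^p * a^r = a^{2q}` is positive, so `a^p` has the sign of `a^r`
  have hap : a ^ p < 0 := by
    have : 0 < a ^ p * a ^ r := h2q ▸ (even_two_mul q).pow_pos ha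
    exact neg_of_mul_pos_left this har.le
  rw [h2q]
  nlinarith

theorem eq_zero_or_pow_eq_half (hq : 0 < q) {b : ℝ}
    (hcrit : -(q * b ^ (q - 1)) + 2 * q * b ^ (2 * q - 1) = 0) : b = 0 ∨ b ^ q = 1 / 2 := by
  rw [show 2 * q - 1 = (q - 1) + q by omega, pow_add] at hcrit
  have : (q * b ^ (q - 1)) * (2 * b ^ q - 1) = 0 := by linear_combination hcrit
  rcases mul_eq_zero.mp this with h | h
  · exact .inl (eq_zero_of_pow_eq_zero ((mul_eq_zero.mp h).resolve_left (by positivity)))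
  · exact .inr (by linarith)

theorem eq_zero_of_mem_CpqE_of_pderiv_eq_zero (hp : 0 < p) (hpq : p < 2 * q) {x : En 2}
    (hx : x ∈ CpqE p q) (hcrit : ∀ i, pEval (pderiv i (FpqPoly p q)) x = 0) : x = 0 := by
  have hF : Fpq p q (x 0, x 1) = 0 := (pEval_FpqPoly x).symm.trans hx
  have hcrit₀ := pEval_pderiv_zero_FpqPoly x ▸ hcrit 0
  have hcrit₁ := pEval_pderiv_one_FpqPoly x ▸ hcrit 1
  have hsq : x 1 ^ (2 * q) = (x 1 ^ q) ^ 2 := by rw [← pow_mul, mul_comm]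
  simp only [Fpq, hsq] at hF
  have hx₀ : x 0 = 0 := by
    by_contra h
    have := pow_add_pow_two_mul_neg hp hpq h hcrit₀
    rcases eq_zero_or_pow_eq_half (by omega) hcrit₁ with h₁ | h₁
    · simp [h₁, show q ≠ 0 by omega] at hF
      linarith
    · rw [h₁] at hF
      linarith
  have hx₁ : x 1 = 0 := by
    simp [hx₀, show p ≠ 0 by omega, show 2 * q ≠ 0 by omega] at hF
    rcases eq_zero_or_pow_eq_half (by omega) hcrit₁ with h₁ | h₁
    · exact h₁
    · rw [h₁] at hF
      norm_num at hF
  ext i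
  fin_cases i <;> assumption

theorem weight_qp_eq_q_iff (hp : 0 < p) (hdvd : ¬ p ∣ q) (m : Fin 2 →₀ ℕ) :
    Finsupp.weight ![q, p] m = q ↔ m = Finsupp.single 0 1 := by
  have hq : 0 < q := Nat.pos_of_ne_zero fun h => hdvd (h ▸ dvd_zero p)
  simp only [Finsupp.weight_eq_sum, Fin.sum_univ_two, smul_eq_mul, Finsupp.ext_iff,
    Fin.forall_fin_two]
  simp only [Fin.isValue, Matrix.cons_val_zero, Matrix.cons_val_one, Matrix.cons_val_fin_one,
    Finsupp.single_eq_same, ne_eq, one_ne_zero, not_false_eq_true, Finsupp.single_eq_of_ne]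
  constructor
  · intro h
    obtain h₀ | h₀ | h₀ : m 0 = 0 ∨ m 0 = 1 ∨ 2 ≤ m 0 := by omega
    · exact absurd ⟨m 1, by rw [← h, h₀]; ring⟩ hdvd
    · refine ⟨h₀, ?_⟩
      rw [h₀] at h
      nlinarith
    · nlinarith
  · rintro ⟨h₀, h₁⟩
    simp [h₀, h₁]

theorem weight_qp_eq_p_iff (hp : 0 < p) (hpq : p < q) (m : Fin 2 →₀ ℕ) :
    Finsupp.weight ![q, p] m = p ↔ m = Finsupp.single 1 1 := by
  simp only [Finsupp.weight_eq_sum, Fin.sum_univ_two, smul_eq_mul, Finsupp.ext_iff,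
    Fin.forall_fin_two]
  simp only [Fin.isValue, Matrix.cons_val_zero, Matrix.cons_val_one, Matrix.cons_val_fin_one,
    Finsupp.single_eq_same, ne_eq, zero_ne_one, not_false_eq_true, Finsupp.single_eq_of_ne]
  constructor
  · intro h
    obtain h₀ | h₀ : m 0 = 0 ∨ 1 ≤ m 0 := by omega
    · rw [h₀] at h
      exact ⟨h₀, by nlinarith⟩
    · nlinarith
  · rintro ⟨h₀, h₁⟩
    simp [h₀, h₁]

/-- `P(t^q, t^p)`: the restriction of `P` to the cusp `x^p = y^q`. -/
def cuspPullback (p q : ℕ) (P : MvPolynomial (Fin 2) ℝ) : Polynomial ℝ :=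
  aeval (fun i => Polynomial.X ^ ![q, p] i) P

theorem eval_cuspPullback (P : MvPolynomial (Fin 2) ℝ) (s : ℝ) :
    (cuspPullback p q P).eval s = eval ![s ^ q, s ^ p] P := by
  have hpt : (fun j => (Polynomial.X ^ ![q, p] j).eval s) = ![s ^ q, s ^ p] := by
    ext j
    fin_cases j <;> simp
  rw [cuspPullback, polynomial_eval_aeval, hpt]

theorem exists_Fpq_eq_zero_of_pow_le (hp : p ≠ 0) (hq : q ≠ 0) {t y : ℝ} (ht : 0 ≤ t)
    (hy0 : 0 ≤ y) (hy1 : y ≤ 1) (hyt : y ^ q ≤ t ^ p) :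
    ∃ x ∈ Set.Icc 0 t, Fpq p q (x, y) = 0 := by
  have hy : y ^ (2 * q) ≤ y ^ q := pow_le_pow_of_le_one hy0 hy1 (by omega)
  obtain ⟨x, hx, hFx⟩ : ∃ x ∈ Set.Icc 0 t, x ^ p + x ^ (2 * q) = y ^ q - y ^ (2 * q) := by
    refine intermediate_value_Icc ht (by fun_prop) ⟨?_, ?_⟩
    · simp [hp, hq, hy]
    · linarith [pow_nonneg ht (2 * q), pow_nonneg hy0 (2 * q)]
  exact ⟨x, hx, by simp only [Fpq]; linarith⟩

theorem exists_Fpq_eq_zero_near (hp : 0 < p) (hpq : p ≤ q) {s : ℝ} (hs0 : 0 < s)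
    (hs1 : s ≤ 1) : ∃ x ∈ Set.Icc 0 (s ^ q), Fpq p q (x, s ^ p) = 0 ∧
      s ^ q - x ≤ 2 * s ^ (p * q + q) := by
  have hcusp : (s ^ p) ^ q = (s ^ q) ^ p := by rw [← pow_mul, ← pow_mul, mul_comm]
  obtain ⟨x, ⟨hx0, hxt⟩, hF⟩ := exists_Fpq_eq_zero_of_pow_le hp.ne' (by omega)
    (pow_nonneg hs0.le q) (pow_nonneg hs0.le p) (pow_le_one₀ hs0.le hs1) hcusp.le
  refine ⟨x, ⟨hx0, hxt⟩, hF, ?_⟩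
  obtain ⟨r, rfl⟩ : ∃ r, p = r + 1 := ⟨p - 1, by omega⟩
  have hx : x ^ (2 * q) ≤ s ^ (2 * ((r + 1) * q)) :=
    calc x ^ (2 * q) ≤ (s ^ q) ^ (2 * q) := pow_le_pow_left₀ hx0 hxt _
      _ ≤ s ^ (2 * ((r + 1) * q)) := by
        rw [← pow_mul]
        exact pow_le_pow_of_le_one hs0.le hs1 (by nlinarith)
  have key : (s ^ q - x) * (s ^ q) ^ r ≤ 2 * s ^ ((r + 1) * q + q) * (s ^ q) ^ r :=
    calc (s ^ q - x) * (s ^ q) ^ r ≤ (s ^ q) ^ (r + 1) - x ^ (r + 1) :=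
          sub_mul_pow_le_pow_succ_sub_pow_succ hx0 hxt r
      _ = (s ^ (r + 1)) ^ (2 * q) + x ^ (2 * q) := by
        simp only [Fpq] at hF
        linarith
      _ ≤ 2 * s ^ (2 * ((r + 1) * q)) := by
        rw [← pow_mul, show (r + 1) * (2 * q) = 2 * ((r + 1) * q) by ring]
        linarith
      _ = 2 * s ^ ((r + 1) * q + q) * (s ^ q) ^ r := by
        rw [← pow_mul, mul_assoc, ← pow_add]
        ring_nf
  exact le_of_mul_le_mul_right key (by positivity)

theorem eval_eq_zero_of_mem_polyVanishingIdeal_CpqE {P : MvPolynomial (Fin 2) ℝ}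
    (hP : P ∈ polyVanishingIdeal (CpqE p q)) {x y : ℝ} (h : Fpq p q (x, y) = 0) :
    eval ![x, y] P = 0 :=
  hP (WithLp.toLp 2 ![x, y]) (by simpa [CpqE, pEval_FpqPoly] using h)

theorem isBigO_eval_cuspPullback_of_mem_polyVanishingIdeal (hp : 0 < p) (hpq : p ≤ q)
    {P : MvPolynomial (Fin 2) ℝ} (hP : P ∈ polyVanishingIdeal (CpqE p q)) :
    (fun s => (cuspPullback p q P).eval s) =O[𝓝[>] 0] (· ^ (q + 1)) := by
  obtain ⟨K, hK⟩ : ∃ K, LipschitzOnWith K (eval · P) (Set.Icc 0 1) :=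
    ((AnalyticOnNhd.eval_mvPolynomial P).contDiff (n := 1)).contDiffOn.exists_lipschitzOnWith
      one_ne_zero (convex_Icc 0 1) isCompact_Icc
  refine IsBigO.of_bound (2 * K) ?_
  filter_upwards [Ioo_mem_nhdsGT one_pos] with s ⟨hs0, hs1⟩
  obtain ⟨x, ⟨hx0, hxq⟩, hFx, hxs⟩ := exists_Fpq_eq_zero_near hp hpq hs0 hs1.le
  have hsq : s ^ q ≤ 1 := pow_le_one₀ hs0.le hs1.le
  have hmem {a : ℝ} (ha0 : 0 ≤ a) (ha1 : a ≤ 1) :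
      ![a, s ^ p] ∈ Set.Icc (0 : Fin 2 → ℝ) 1 := by
    simp [Pi.le_def, Fin.forall_fin_two, ha0, ha1, hs0.le, pow_le_one₀ hs0.le hs1.le]
  have hdist : dist ![s ^ q, s ^ p] ![x, s ^ p] ≤ s ^ q - x := by
    refine dist_pi_le_iff (by linarith) |>.mpr fun j => ?_
    fin_cases j <;> simp [Real.dist_eq, abs_of_nonneg (sub_nonneg.mpr hxq), hxq]
  calc ‖_‖ = dist (eval ![s ^ q, s ^ p] P) (eval ![x, s ^ p] P) := by
        rw [eval_cuspPullback, eval_eq_zero_of_mem_polyVanishingIdeal_CpqE hP hFx, dist_zero_right]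
    _ ≤ K * dist ![s ^ q, s ^ p] ![x, s ^ p] :=
        hK.dist_le_mul _ (hmem (by positivity) hsq) _ (hmem hx0 (hxq.trans hsq))
    _ ≤ K * (2 * s ^ (p * q + q)) := by gcongr; linarith
    _ = 2 * K * s ^ (p * q + q) := by ring
    _ ≤ 2 * K * ‖s ^ (q + 1)‖ := by
        rw [Real.norm_of_nonneg (by positivity)]
        exact mul_le_mul_of_nonneg_left (pow_le_pow_of_le_one hs0.le hs1.le (by nlinarith))
          (by positivity)

theorem pEval_pderiv_eq_zero_of_mem_polyVanishingIdeal (hp : 0 < p) (hpq : p < q)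
    (hdvd : ¬ p ∣ q) {P : MvPolynomial (Fin 2) ℝ} (hP : P ∈ polyVanishingIdeal (CpqE p q))
    (i : Fin 2) : pEval (pderiv i P) 0 = 0 := by
  have hcoeff {k : ℕ} (hk : k ≤ q) : (cuspPullback p q P).coeff k = 0 :=
    Polynomial.coeff_eq_zero_of_isBigO_pow (nhdsGT_le_nhdsNE 0)
      (isBigO_eval_cuspPullback_of_mem_polyVanishingIdeal hp hpq.le hP) (by omega)
  rw [pEval, show (fun j => (0 : En 2) j) = 0 from rfl, eval_zero_pderiv]
  fin_cases i
  · exact (coeff_aeval_X_pow_of_weight_eq_iff (weight_qp_eq_q_iff hp hdvd) P).symm.trans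
      (hcoeff le_rfl)
  · exact (coeff_aeval_X_pow_of_weight_eq_iff (weight_qp_eq_p_iff hp hpq) P).symm.trans
      (hcoeff hpq.le)

end Cpq

/-- Lemma 2.2 (`lem-2-2`), part (ii): the origin is the unique singular point of `C_{p,q}`. -/
theorem lem_2_2_ii {p q : ℕ} (hp : p.Prime) (hq : q.Prime) (hpq : p < q) :
    (0 : En 2) ∈ CpqE p q ∧
    (∀ i : Fin 2, pEval (MvPolynomial.pderiv i (FpqPoly p q)) (0 : En 2) = 0) ∧
    (∀ x ∈ CpqE p q, x ≠ 0 →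
      ∃ i : Fin 2, pEval (MvPolynomial.pderiv i (FpqPoly p q)) x ≠ 0) ∧
    (∀ x ∈ CpqE p q, x ≠ 0 → NonsingularAt (CpqE p q) 1 x) ∧
    ¬ NonsingularAt (CpqE p q) 1 (0 : En 2) := by
  have hdvd : ¬ p ∣ q := fun h => hpq.ne ((Nat.prime_dvd_prime_iff_eq hp hq).mp h)
  have hsing {P : MvPolynomial (Fin 2) ℝ} (hP : P ∈ polyVanishingIdeal (CpqE p q)) :
      ∀ i, pEval (pderiv i P) 0 = 0 :=
    pEval_pderiv_eq_zero_of_mem_polyVanishingIdeal hp.pos hpq hdvd hP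
  have hcrit (x : En 2) (hx : x ∈ CpqE p q) (hx0 : x ≠ 0) :
      ∃ i, pEval (pderiv i (FpqPoly p q)) x ≠ 0 := by
    by_contra! h
    exact hx0 (eq_zero_of_mem_CpqE_of_pderiv_eq_zero hp.pos (by omega) hx h)
  refine ⟨?_, hsing fun _ hx => hx, hcrit, fun x hx hx0 => ?_,
    not_nonsingularAt_of_pderiv_eq_zero one_lt_two fun _ hP => hsing hP⟩
  · simp [CpqE, pEval_FpqPoly, Fpq, hp.ne_zero, hq.ne_zero]
  · obtain ⟨i, hi⟩ := hcrit x hx hx0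
    exact nonsingularAt_zeroSet_of_pderiv_ne_zero rfl hi
end
end
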